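/- arXiv:2410.10243 — 6 statements merged into one kernel-verified Lean document; each statement's English description precedes it below -/
import Mathlib

section
/- Let X be a non-empty set, let Σ_Z be a σ-algebra on Z = X × {0,1}, let 𝒟 be a set of probability measures on (Z, Σ_Z), and let H ⊆ {0,1}^X be a non-empty hypothesis space that is well-behaved with respect to 𝒟. If H has finite VC dimension, then H has the uniform convergence property with respect to 𝒟. -/
/-!
Symmetrization with a ghost sample. For a fixed `h`, Chebyshev's inequality gives
`|er_D(h) - ˆer_{z'}(h)| < ε/4` with probability at least `1/2` once `m ε² ≥ 8`, hence
`P(U > ε) ≤ 2 P(V > ε/2)`. Exchanging `z_i` and `z'_i` for the indices in any `σ ⊆ {1,…,m}`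
preserves the law of `(z, z')`, so `P(V > ε/2)` is at most the largest fraction of the `2^m`
exchanges that put a fixed `(z, z')` into `{V > ε/2}`. On the `2m` sample points `H` has at most
`(2m+1)^d` restrictions (Sauer–Shelah), and for each of them the difference of sample errors is a
Rademacher sum, which exceeds `ε/2` in absolute value for at most a fraction `2 exp(-m ε²/8)` of
the `σ` (Chernoff, via `cosh x ≤ exp (x²/2)`). Hence `P(U > ε) ≤ 4 (2m+1)^d exp(-m ε²/8) → 0`.
-/

open MeasureTheory

namespace PAC

variable {X : Type*}

/-- The graph `Γ(h) = {(x,y) ∈ Z : h x = y}` of a hypothesis `h : X → {0,1}`. -/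
def graph (h : X → Bool) : Set (X × Bool) := {z | h z.1 = z.2}

/-- The true error `er_D(h) = D(Z \ Γ(h))`. -/
noncomputable def trueError [MeasurableSpace (X × Bool)]
    (D : Measure (X × Bool)) (h : X → Bool) : ℝ :=
  (D {z : X × Bool | h z.1 ≠ z.2}).toReal

/-- The sample error `ˆer_z(h) = (1/m)·#{i : h x_i ≠ y_i}`. -/
noncomputable def empError {m : ℕ} (z : Fin m → X × Bool) (h : X → Bool) : ℝ :=
  ((Finset.univ.filter fun i => h (z i).1 ≠ (z i).2).card : ℝ) / (m : ℝ)

/-- `opt_D(H) = inf_{h ∈ H} er_D(h)`. -/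
noncomputable def optError [MeasurableSpace (X × Bool)]
    (D : Measure (X × Bool)) (H : Set (X → Bool)) : ℝ :=
  ⨅ h : H, trueError D h.1

/-- `ˆopt_z(H) = inf_{h ∈ H} ˆer_z(h)`. -/
noncomputable def empOpt {m : ℕ} (z : Fin m → X × Bool) (H : Set (X → Bool)) : ℝ :=
  ⨅ h : H, empError z h.1

/-- The map `U : Z^m → [0,1]`, `z ↦ sup_{h ∈ H} |er_D(h) − ˆer_z(h)|`. -/
noncomputable def U [MeasurableSpace (X × Bool)] (H : Set (X → Bool))
    (m : ℕ) (D : Measure (X × Bool)) (z : Fin m → X × Bool) : ℝ :=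
  ⨆ h : H, |trueError D h.1 - empError z h.1|

/-- The map `V : Z^m × Z^m = Z^{2m} → ℝ`,
`(z,z') ↦ sup_{h ∈ H} |ˆer_{z'}(h) − ˆer_z(h)|`. -/
noncomputable def V (H : Set (X → Bool)) (m : ℕ)
    (p : (Fin m → X × Bool) × (Fin m → X × Bool)) : ℝ :=
  ⨆ h : H, |empError p.2 h.1 - empError p.1 h.1|

/-- `H` is well-behaved with respect to `𝒟`. -/
def WellBehaved [MeasurableSpace (X × Bool)] (H : Set (X → Bool))
    (𝒟 : Set (Measure (X × Bool))) : Prop :=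
  (∀ h ∈ H, MeasurableSet (graph h)) ∧
  ∃ mH : ℕ, 0 < mH ∧ ∀ m : ℕ, mH ≤ m →
    Measurable (V H m) ∧ ∀ D ∈ 𝒟, Measurable (U H m D)

/-- `H` has the uniform convergence property with respect to `𝒟`. -/
def UCP [MeasurableSpace (X × Bool)] (H : Set (X → Bool))
    (𝒟 : Set (Measure (X × Bool))) : Prop :=
  ∃ mH : ℕ, 0 < mH ∧
    (∀ m : ℕ, mH ≤ m → ∀ D ∈ 𝒟, Measurable (U H m D)) ∧
    ∀ ε ∈ Set.Ioo (0:ℝ) 1, ∀ δ ∈ Set.Ioo (0:ℝ) 1, ∃ m₀ : ℕ, mH ≤ m₀ ∧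
      ∀ m : ℕ, m₀ ≤ m → ∀ D ∈ 𝒟,
        ENNReal.ofReal (1 - δ) ≤
          Measure.pi (fun _ : Fin m => D) {z | U H m D z ≤ ε}

/-- A learning function `A` (defined on all multi-samples) whose values lie in `H`. -/
def IsLearningFunction (H : Set (X → Bool))
    (A : ∀ m : ℕ, (Fin m → X × Bool) → (X → Bool)) : Prop :=
  ∀ (m : ℕ) (z : Fin m → X × Bool), A m z ∈ H

/-- The learning function `A` is PAC with respect to `𝒟`. -/
def IsPAC [MeasurableSpace (X × Bool)] (H : Set (X → Bool))
    (𝒟 : Set (Measure (X × Bool)))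
    (A : ∀ m : ℕ, (Fin m → X × Bool) → (X → Bool)) : Prop :=
  ∀ ε ∈ Set.Ioo (0:ℝ) 1, ∀ δ ∈ Set.Ioo (0:ℝ) 1, ∃ m₀ : ℕ, 0 < m₀ ∧
    ∀ m : ℕ, m₀ ≤ m → ∀ D ∈ 𝒟, ∃ C : Set (Fin m → X × Bool),
      MeasurableSet C ∧
      C ⊆ {z | trueError D (A m z) - optError D H ≤ ε} ∧
      ENNReal.ofReal (1 - δ) ≤ Measure.pi (fun _ : Fin m => D) C

/-- `H` is PAC learnable with respect to `𝒟`. -/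
def PACLearnable [MeasurableSpace (X × Bool)] (H : Set (X → Bool))
    (𝒟 : Set (Measure (X × Bool))) : Prop :=
  ∃ A : ∀ m : ℕ, (Fin m → X × Bool) → (X → Bool),
    IsLearningFunction H A ∧ IsPAC H 𝒟 A

/-- The learning function `A` nearly minimizes the sample error. -/
def IsNMSE (H : Set (X → Bool))
    (A : ∀ m : ℕ, (Fin m → X × Bool) → (X → Bool)) : Prop :=
  ∀ ε ∈ Set.Ioo (0:ℝ) 1, ∃ m₀ : ℕ, 0 < m₀ ∧
    ∀ m : ℕ, m₀ ≤ m → ∀ z : Fin m → X × Bool,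
      empError z (A m z) - empOpt z H ≤ ε

/-- `H` shatters the finite set `A ⊆ X`. -/
def Shatters (H : Set (X → Bool)) (A : Finset X) : Prop :=
  ∀ f : X → Bool, ∃ h ∈ H, ∀ x ∈ A, h x = f x

/-- `vc(H) < ∞`. -/
def FiniteVC (H : Set (X → Bool)) : Prop :=
  ∃ d : ℕ, ∀ A : Finset X, Shatters H A → A.card ≤ d

/-- A discrete uniform distribution on `(Z, Σ_Z)`. -/
def IsDiscreteUniform [MeasurableSpace (X × Bool)]
    (D : Measure (X × Bool)) : Prop :=
  ∃ (ℓ : ℕ), 0 < ℓ ∧ ∃ z : Fin ℓ → X × Bool,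
    D = (ℓ : ENNReal)⁻¹ • ∑ j, Measure.dirac (z j)

end PAC

open Filter Finset MeasureTheory ProbabilityTheory Real Topology
open scoped ENNReal

section Rademacher

variable {ι : Type*} [Fintype ι]

def rademacherSum (σ : ι → Bool) (c : ι → ℝ) : ℝ := ∑ i, (if σ i then -1 else 1) * c i

lemma rademacherSum_neg (σ : ι → Bool) (c : ι → ℝ) :
    rademacherSum σ (-c) = -rademacherSum σ c := by
  simp [rademacherSum, Finset.sum_neg_distrib]

lemma sum_exp_mul_rademacherSum_le [DecidableEq ι] {c : ι → ℝ} (hc : ∀ i, |c i| ≤ 1)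
    (l : ℝ) :
    ∑ σ : ι → Bool, exp (l * rademacherSum σ c)
      ≤ 2 ^ Fintype.card ι * exp (l ^ 2 * Fintype.card ι / 2) := by
  have hcosh : ∀ i, exp (-(l * c i)) + exp (l * c i) ≤ 2 * exp (l ^ 2 / 2) := fun i => by
    have hsq : (l * c i) ^ 2 ≤ l ^ 2 := by
      rw [mul_pow]
      exact mul_le_of_le_one_right (sq_nonneg l) ((sq_le_one_iff_abs_le_one _).2 (hc i))
    calc exp (-(l * c i)) + exp (l * c i) = 2 * cosh (l * c i) := by rw [cosh_eq]; ring
      _ ≤ 2 * exp (l ^ 2 / 2) := by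
        gcongr
        exact (cosh_le_exp_half_sq _).trans (exp_le_exp.2 (by linarith))
  calc ∑ σ : ι → Bool, exp (l * rademacherSum σ c)
      = ∏ i, ∑ b : Bool, exp (l * ((if b then -1 else 1) * c i)) := by
        rw [Fintype.prod_sum]
        simp only [rademacherSum, Finset.mul_sum, Real.exp_sum]
    _ ≤ ∏ _i : ι, 2 * exp (l ^ 2 / 2) := by
        refine Finset.prod_le_prod (fun i _ => by positivity) fun i _ => ?_
        simpa [Fintype.sum_bool] using hcosh i
    _ = 2 ^ Fintype.card ι * exp (l ^ 2 * Fintype.card ι / 2) := by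
        rw [Finset.prod_const, mul_pow, ← Real.exp_nat_mul, card_univ]
        ring_nf

lemma card_le_rademacherSum_le [DecidableEq ι] {c : ι → ℝ} (hc : ∀ i, |c i| ≤ 1)
    {t : ℝ} (ht : 0 ≤ t) :
    (#{σ | t ≤ rademacherSum σ c} : ℝ)
      ≤ 2 ^ Fintype.card ι * exp (-t ^ 2 / (2 * Fintype.card ι)) := by
  set n : ℝ := (Fintype.card ι : ℝ)
  -- the minimiser of `l ^ 2 * n / 2 - l * t`
  set l := t / n
  have hexponent : l ^ 2 * n / 2 - l * t = -t ^ 2 / (2 * n) := by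
    rcases eq_or_ne n 0 with hn | hn
    · simp [l, hn]
    · simp only [l]; field_simp; ring
  have hmarkov : (#{σ | t ≤ rademacherSum σ c} : ℝ) * exp (l * t)
      ≤ ∑ σ : ι → Bool, exp (l * rademacherSum σ c) := calc
    _ = ∑ σ with t ≤ rademacherSum σ c, exp (l * t) := by rw [sum_const, nsmul_eq_mul]
    _ ≤ ∑ σ with t ≤ rademacherSum σ c, exp (l * rademacherSum σ c) :=
        sum_le_sum fun σ hσ => exp_le_exp.2 <|
          mul_le_mul_of_nonneg_left (mem_filter.1 hσ).2 (by positivity)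
    _ ≤ _ := sum_le_sum_of_subset_of_nonneg (filter_subset _ _) fun _ _ _ => (exp_pos _).le
  rw [← hexponent, exp_sub, mul_div_assoc', le_div_iff₀ (exp_pos _)]
  exact hmarkov.trans (sum_exp_mul_rademacherSum_le hc l)

lemma card_le_abs_rademacherSum_le [DecidableEq ι] {c : ι → ℝ} (hc : ∀ i, |c i| ≤ 1)
    {t : ℝ} (ht : 0 ≤ t) :
    (#{σ | t ≤ |rademacherSum σ c|} : ℝ)
      ≤ 2 * 2 ^ Fintype.card ι * exp (-t ^ 2 / (2 * Fintype.card ι)) := by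
  have hc' : ∀ i, |(-c) i| ≤ 1 := fun i => by simpa using hc i
  calc (#{σ | t ≤ |rademacherSum σ c|} : ℝ)
      ≤ #{σ | t ≤ rademacherSum σ c} + #{σ | t ≤ rademacherSum σ (-c)} := by
        norm_cast
        simp only [le_abs, rademacherSum_neg, filter_or]
        exact card_union_le _ _
    _ ≤ _ := by linarith [card_le_rademacherSum_le hc ht, card_le_rademacherSum_le hc' ht]

end Rademacher

lemma sum_Iic_choose_le_succ_pow (d n : ℕ) : ∑ j ∈ Iic d, n.choose j ≤ (n + 1) ^ d := calc
  ∑ j ∈ Iic d, n.choose j ≤ ∑ j ∈ range (d + 1), n ^ j * d.choose j := by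
      rw [Nat.range_succ_eq_Iic]
      refine sum_le_sum fun j hj => (Nat.choose_le_pow n j).trans ?_
      exact Nat.le_mul_of_pos_right _ (Nat.choose_pos (mem_Iic.1 hj))
  _ = (n + 1) ^ d := by rw [add_pow]; simp

section CoordSwap

variable {Z ι : Type*} [Fintype ι]

def coordSwap (σ : ι → Bool) (p : (ι → Z) × (ι → Z)) : (ι → Z) × (ι → Z) :=
  (fun i => if σ i then p.2 i else p.1 i, fun i => if σ i then p.1 i else p.2 i)

lemma measurePreserving_coordSwap [MeasurableSpace Z] (μ : Measure Z) [SigmaFinite μ]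
    (σ : ι → Bool) :
    MeasurePreserving (coordSwap σ) ((Measure.pi fun _ : ι => μ).prod (Measure.pi fun _ => μ))
      ((Measure.pi fun _ : ι => μ).prod (Measure.pi fun _ => μ)) := by
  let e := MeasurableEquiv.arrowProdEquivProdArrow Z Z ι
  have he : MeasurePreserving e (Measure.pi fun _ => μ.prod μ)
      ((Measure.pi fun _ : ι => μ).prod (Measure.pi fun _ => μ)) :=
    measurePreserving_arrowProdEquivProdArrow Z Z ι _ _
  have hswap : MeasurePreserving (fun (a : ι → Z × Z) i => if σ i then (a i).swap else a i)
      (Measure.pi fun _ => μ.prod μ) (Measure.pi fun _ => μ.prod μ) := by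
    refine measurePreserving_pi (fun _ : ι => μ.prod μ) (fun _ : ι => μ.prod μ)
      (f := fun i q => if σ i then q.swap else q) fun i => ?_
    split
    · exact Measure.measurePreserving_swap
    · exact MeasurePreserving.id _
  convert (he.comp hswap).comp (he.symm e) using 1
  funext p
  ext i <;> by_cases hσ : σ i <;> simp [e, coordSwap, MeasurableEquiv.arrowProdEquivProdArrow,
    Equiv.arrowProdEquivProdArrow, hσ]

end CoordSwap

open Classical in
lemma card_mul_measure_le_of_card_filter_le {α ι : Type*} [MeasurableSpace α] [Fintype ι]
    {μ : Measure α} [IsProbabilityMeasure μ] {T : ι → α → α}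
    (hT : ∀ i, MeasurePreserving (T i) μ μ) {W : Set α} (hW : MeasurableSet W) {c : ℝ≥0∞}
    (hc : ∀ p, (#{i | T i p ∈ W} : ℝ≥0∞) ≤ c) :
    Fintype.card ι * μ W ≤ c := calc
  Fintype.card ι * μ W = ∑ i, μ (T i ⁻¹' W) := by
      simp [(hT _).measure_preimage hW.nullMeasurableSet]
  _ = ∫⁻ p, ∑ i, (T i ⁻¹' W).indicator 1 p ∂μ := by
      rw [lintegral_finsetSum _ fun i _ => measurable_one.indicator ((hT i).measurable hW)]
      simp [lintegral_indicator_one ((hT _).measurable hW)]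
  _ = ∫⁻ p, (#{i | T i p ∈ W} : ℝ≥0∞) ∂μ := by
      simp [Set.indicator_apply, Finset.sum_boole]
  _ ≤ ∫⁻ _, c ∂μ := lintegral_mono hc
  _ = c := by simp

lemma tendsto_two_mul_add_one_pow_mul_exp_neg_mul (d : ℕ) {b : ℝ} (hb : 0 < b) :
    Tendsto (fun m : ℕ => (2 * m + 1 : ℝ) ^ d * exp (-(b * m))) atTop (𝓝 0) := by
  have hlim := (tendsto_rpow_mul_exp_neg_mul_atTop_nhds_zero d (b / 2) (by positivity)).comp
    (tendsto_atTop_add_const_right _ 1 (tendsto_natCast_atTop_atTop.const_mul_atTop two_pos))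
  convert hlim.mul_const (exp (b / 2)) using 1
  · funext m
    simp only [Function.comp_apply, rpow_natCast, mul_assoc, ← exp_add]
    ring_nf
  · simp

lemma ofReal_one_sub_le_measure_compl {α : Type*} [MeasurableSpace α] {μ : Measure α}
    [IsProbabilityMeasure μ] {s : Set α} (hs : MeasurableSet s) {δ : ℝ} (hδ : 0 ≤ δ)
    (h : μ s ≤ ENNReal.ofReal δ) : ENNReal.ofReal (1 - δ) ≤ μ sᶜ := by
  rw [prob_compl_eq_one_sub hs, ENNReal.ofReal_sub _ hδ, ENNReal.ofReal_one]
  exact tsub_le_tsub_left h 1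

namespace PAC

section Traces

variable {X ι : Type*} [Fintype ι] {H : Set (X → Bool)} {pt : ι → X}

open Classical in
noncomputable def traces (H : Set (X → Bool)) (pt : ι → X) : Finset (Finset ι) :=
  {u | ∃ h ∈ H, ({i | h (pt i)} : Finset ι) = u}

lemma mem_traces {u : Finset ι} :
    u ∈ traces H pt ↔ ∃ h ∈ H, ({i | h (pt i)} : Finset ι) = u := by
  simp [traces]

lemma injOn_of_shatters_traces [DecidableEq ι] {s : Finset ι} (hs : (traces H pt).Shatters s) :
    Set.InjOn pt s := by
  intro i hi j hj hij
  obtain ⟨u, hu, hsu⟩ := hs.exists_inter_eq_singleton hi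
  obtain ⟨h, -, rfl⟩ := mem_traces.1 hu
  have hi' : i ∈ s ∩ ({k | h (pt k)} : Finset ι) := hsu ▸ mem_singleton_self i
  have hj' : j ∈ s ∩ ({k | h (pt k)} : Finset ι) := by
    simp only [mem_inter, mem_filter, mem_univ, true_and] at hi' ⊢
    exact ⟨hj, hij ▸ hi'.2⟩
  rw [hsu, mem_singleton] at hj'
  exact hj'.symm

lemma shatters_image_of_shatters_traces [DecidableEq ι] [DecidableEq X] {s : Finset ι}
    (hs : (traces H pt).Shatters s) :
    Shatters H (s.image pt) := by
  intro f
  obtain ⟨u, hu, hsu⟩ := hs (filter_subset (fun i => f (pt i)) s)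
  obtain ⟨h, hH, rfl⟩ := mem_traces.1 hu
  refine ⟨h, hH, ?_⟩
  simp only [mem_image, forall_exists_index, and_imp]
  rintro _ i hi rfl
  have := congrArg (i ∈ ·) hsu
  simp only [mem_inter, mem_filter, mem_univ, true_and, hi, eq_iff_iff] at this
  exact Bool.eq_iff_iff.2 this

lemma vcDim_traces_le [DecidableEq ι] {d : ℕ}
    (hvc : ∀ A : Finset X, Shatters H A → A.card ≤ d) :
    (traces H pt).vcDim ≤ d :=
  Finset.sup_le fun s hs => by
    classical
    rw [mem_shatterer] at hs
    simpa [card_image_of_injOn (injOn_of_shatters_traces hs)] using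
      hvc _ (shatters_image_of_shatters_traces hs)

lemma card_traces_le [DecidableEq ι] {d : ℕ}
    (hvc : ∀ A : Finset X, Shatters H A → A.card ≤ d) :
    #(traces H pt) ≤ (Fintype.card ι + 1) ^ d := calc
  #(traces H pt) ≤ #(traces H pt).shatterer := card_le_card_shatterer _
  _ ≤ ∑ j ∈ Iic (traces H pt).vcDim, (Fintype.card ι).choose j := card_shatterer_le_sum_vcDim
  _ ≤ ∑ j ∈ Iic d, (Fintype.card ι).choose j :=
      sum_le_sum_of_subset (Iic_subset_Iic.2 (vcDim_traces_le hvc))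
  _ ≤ (Fintype.card ι + 1) ^ d := sum_Iic_choose_le_succ_pow d _

lemma ncard_image_comp_le {d : ℕ} (hvc : ∀ A : Finset X, Shatters H A → A.card ≤ d)
    (pt : ι → X) :
    ((· ∘ pt) '' H).ncard ≤ (Fintype.card ι + 1) ^ d := by
  classical
  refine le_trans ?_ (card_traces_le (pt := pt) hvc)
  rw [← Set.ncard_coe_finset]
  refine Set.ncard_le_ncard_of_injOn (fun g => ({i | g i} : Finset ι)) ?_ ?_
    (Finset.finite_toSet _)
  · rintro _ ⟨h, hH, rfl⟩
    exact mem_traces.2 ⟨h, hH, rfl⟩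
  · intro g _ g' _ hgg'
    funext i
    simpa using congrArg (i ∈ ·) hgg'

end Traces

variable {X : Type*}

def zeroOneLoss (h : X → Bool) (w : X × Bool) : ℝ := if h w.1 = w.2 then 0 else 1

lemma zeroOneLoss_mem_Icc (h : X → Bool) (w : X × Bool) : zeroOneLoss h w ∈ Set.Icc 0 1 := by
  unfold zeroOneLoss; split <;> simp

lemma measurable_zeroOneLoss [MeasurableSpace (X × Bool)] {h : X → Bool}
    (hG : MeasurableSet (graph h)) : Measurable (zeroOneLoss h) :=
  Measurable.ite hG measurable_const measurable_const

lemma empError_eq_sum_div {m : ℕ} (z : Fin m → X × Bool) (h : X → Bool) :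
    empError z h = (∑ i, zeroOneLoss h (z i)) / m := by
  simp [empError, zeroOneLoss, Finset.sum_ite, Finset.filter_not]

lemma empError_mem_Icc {m : ℕ} (z : Fin m → X × Bool) (h : X → Bool) :
    empError z h ∈ Set.Icc 0 1 := by
  rw [empError_eq_sum_div]
  have hsum : ∑ i, zeroOneLoss h (z i) ∈ Set.Icc 0 (m : ℝ) := by
    refine ⟨sum_nonneg fun i _ => (zeroOneLoss_mem_Icc h (z i)).1, ?_⟩
    simpa using sum_le_card_nsmul univ _ 1 fun i _ => (zeroOneLoss_mem_Icc h (z i)).2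
  exact ⟨div_nonneg hsum.1 m.cast_nonneg, div_le_one_of_le₀ hsum.2 m.cast_nonneg⟩

lemma measurable_empError [MeasurableSpace (X × Bool)] {h : X → Bool}
    (hG : MeasurableSet (graph h)) (m : ℕ) :
    Measurable fun z : Fin m → X × Bool => empError z h := by
  simp_rw [empError_eq_sum_div]
  exact (Finset.measurable_sum _ fun i _ =>
    (measurable_zeroOneLoss hG).comp (measurable_pi_apply i)).div_const _

lemma trueError_eq_integral [MeasurableSpace (X × Bool)] (D : Measure (X × Bool))
    {h : X → Bool} (hG : MeasurableSet (graph h)) :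
    trueError D h = ∫ w, zeroOneLoss h w ∂D := by
  have : zeroOneLoss h = (graph h)ᶜ.indicator 1 := by
    funext w
    by_cases hw : h w.1 = w.2 <;> simp [zeroOneLoss, graph, hw]
  rw [this, integral_indicator_one hG.compl]
  rfl

lemma measure_le_abs_trueError_sub_empError_le [MeasurableSpace (X × Bool)]
    (D : Measure (X × Bool)) [IsProbabilityMeasure D] {h : X → Bool}
    (hG : MeasurableSet (graph h)) {m : ℕ} (hm : 0 < m) {α : ℝ} (hα : 0 < α) :
    Measure.pi (fun _ : Fin m => D) {z | α ≤ |trueError D h - empError z h|}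
      ≤ ENNReal.ofReal (1 / (4 * m * α ^ 2)) := by
  set μ := Measure.pi fun _ : Fin m => D
  let S : (Fin m → X × Bool) → ℝ := ∑ i, fun z => zeroOneLoss h (z i)
  have hS : ∀ z, S z = ∑ i, zeroOneLoss h (z i) := fun z => Finset.sum_apply z _ _
  have hmemLp : MemLp (zeroOneLoss h) 2 D :=
    memLp_of_bounded (.of_forall (zeroOneLoss_mem_Icc h))
      (measurable_zeroOneLoss hG).aestronglyMeasurable 2
  have hmean : μ[S] = m * trueError D h := by
    simp only [hS]
    rw [integral_finsetSum _ fun i _ => integrable_comp_eval (hmemLp.integrable one_le_two)]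
    simp [integral_comp_eval (μ := fun _ : Fin m => D) hmemLp.aestronglyMeasurable,
      trueError_eq_integral D hG]
  have hvar : Var[S; μ] ≤ m / 4 := by
    rw [variance_sum_pi fun _ => hmemLp]
    calc ∑ _i : Fin m, Var[zeroOneLoss h; D] ≤ ∑ _i : Fin m, ((1 - 0) / 2) ^ 2 :=
          sum_le_sum fun _ _ => variance_le_sq_of_bounded (.of_forall (zeroOneLoss_mem_Icc h))
            (measurable_zeroOneLoss hG).aemeasurable
      _ = m / 4 := by simp; ring
  have hmR : (0 : ℝ) < m := by exact_mod_cast hm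
  have hevent : {z | α ≤ |trueError D h - empError z h|} = {z | m * α ≤ |S z - μ[S]|} := by
    ext z
    rw [Set.mem_ofPred_eq, Set.mem_ofPred_eq, hS, hmean, empError_eq_sum_div,
      show trueError D h - (∑ i, zeroOneLoss h (z i)) / m
        = -((∑ i, zeroOneLoss h (z i) - m * trueError D h) / m) by field_simp; ring,
      abs_neg, abs_div, abs_of_pos hmR, le_div_iff₀ hmR, mul_comm]
  rw [hevent]
  refine (meas_ge_le_variance_div_sq ?_ (by positivity)).trans (ENNReal.ofReal_le_ofReal ?_)
  · exact memLp_finsetSum' _ fun i _ => hmemLp.comp_measurePreserving (measurePreserving_eval _ i)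
  · calc Var[S; μ] / (m * α) ^ 2 ≤ m / 4 / (m * α) ^ 2 := by gcongr
      _ = 1 / (4 * m * α ^ 2) := by field_simp

lemma inv_two_le_measure_abs_trueError_sub_empError_lt [MeasurableSpace (X × Bool)]
    (D : Measure (X × Bool)) [IsProbabilityMeasure D] {h : X → Bool}
    (hG : MeasurableSet (graph h)) {m : ℕ} {ε : ℝ} (hε : 0 < ε) (hm : 8 ≤ m * ε ^ 2) :
    2⁻¹ ≤ Measure.pi (fun _ : Fin m => D) {z | |trueError D h - empError z h| < ε / 4} := by
  have hmR : (0 : ℝ) < m := pos_of_mul_pos_left (by linarith) (sq_nonneg ε)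
  have hmeas : MeasurableSet {z | ε / 4 ≤ |trueError D h - empError z h|} :=
    measurableSet_le measurable_const (measurable_const.sub (measurable_empError hG m)).abs
  have hbad := measure_le_abs_trueError_sub_empError_le D hG (Nat.cast_pos.1 hmR)
    (show 0 < ε / 4 by positivity)
  have hhalf : ENNReal.ofReal (1 / (4 * m * (ε / 4) ^ 2)) ≤ 2⁻¹ := by
    rw [← ENNReal.ofReal_ofNat 2, ← ENNReal.ofReal_inv_of_pos two_pos,
      ENNReal.ofReal_le_ofReal_iff (by positivity), div_le_iff₀ (by positivity)]
    nlinarith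
  simp_rw [← not_le]
  rw [← Set.compl_ofPred, prob_compl_eq_one_sub hmeas, ← ENNReal.one_sub_inv_two]
  exact tsub_le_tsub_left (hbad.trans hhalf) 1

lemma abs_empError_sub_empError_le_V {H : Set (X → Bool)} {h : X → Bool} (hh : h ∈ H)
    {m : ℕ} (p : (Fin m → X × Bool) × (Fin m → X × Bool)) :
    |empError p.2 h - empError p.1 h| ≤ V H m p := by
  refine le_ciSup (f := fun h : H => |empError p.2 h.1 - empError p.1 h.1|) ⟨1, ?_⟩ ⟨h, hh⟩
  rintro _ ⟨g, rfl⟩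
  have h₁ := empError_mem_Icc p.1 g.1
  have h₂ := empError_mem_Icc p.2 g.1
  exact abs_sub_le_of_nonneg_of_le h₂.1 h₂.2 h₁.1 h₁.2

lemma measure_lt_U_le_two_mul_measure_lt_V [MeasurableSpace (X × Bool)]
    (D : Measure (X × Bool)) [IsProbabilityMeasure D] {H : Set (X → Bool)} (hH : H.Nonempty)
    (hG : ∀ h ∈ H, MeasurableSet (graph h)) {m : ℕ} (hU : Measurable (U H m D))
    (hV : Measurable (V H m)) {ε : ℝ} (hε : 0 < ε) (hm : 8 ≤ m * ε ^ 2) :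
    Measure.pi (fun _ : Fin m => D) {z | ε < U H m D z}
      ≤ 2 * ((Measure.pi fun _ : Fin m => D).prod (Measure.pi fun _ : Fin m => D))
          {p | ε / 2 < V H m p} := by
  set μ := Measure.pi fun _ : Fin m => D
  set W := {p | ε / 2 < V H m p}
  have hW : MeasurableSet W := measurableSet_lt measurable_const hV
  have hslice : ∀ z ∈ {z | ε < U H m D z}, 2⁻¹ ≤ μ (Prod.mk z ⁻¹' W) := by
    intro z (hz : ε < U H m D z)
    have := hH.to_subtype
    obtain ⟨⟨h, hh⟩, hlt⟩ := exists_lt_of_lt_ciSup hz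
    refine (inv_two_le_measure_abs_trueError_sub_empError_lt D (hG h hh) hε hm).trans
      (measure_mono fun z' hz' => ?_)
    have hV := abs_empError_sub_empError_le_V hh (z, z')
    have hdev := abs_sub_abs_le_abs_sub (trueError D h - empError z h)
      (trueError D h - empError z' h)
    rw [sub_sub_sub_cancel_left] at hdev
    simp only [Set.mem_ofPred_eq, Set.mem_preimage, W] at hz' hV ⊢
    linarith
  calc μ {z | ε < U H m D z} = 2 * ∫⁻ _ in {z | ε < U H m D z}, 2⁻¹ ∂μ := by
        rw [setLIntegral_const, ← mul_assoc,
          ENNReal.mul_inv_cancel two_ne_zero ENNReal.ofNat_ne_top, one_mul]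
    _ ≤ 2 * ∫⁻ z in {z | ε < U H m D z}, μ (Prod.mk z ⁻¹' W) ∂μ := by
        gcongr 1
        exact setLIntegral_mono' (measurableSet_lt measurable_const hU) hslice
    _ ≤ 2 * (μ.prod μ) W := by
        rw [Measure.prod_apply hW]
        gcongr 1
        exact setLIntegral_le_lintegral _ _

def lossDiff {m : ℕ} (p : (Fin m → X × Bool) × (Fin m → X × Bool)) (h : X → Bool) :
    Fin m → ℝ :=
  fun i => zeroOneLoss h (p.2 i) - zeroOneLoss h (p.1 i)

lemma abs_lossDiff_le_one {m : ℕ} (p : (Fin m → X × Bool) × (Fin m → X × Bool))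
    (h : X → Bool) (i : Fin m) : |lossDiff p h i| ≤ 1 := by
  have h₁ := zeroOneLoss_mem_Icc h (p.1 i)
  have h₂ := zeroOneLoss_mem_Icc h (p.2 i)
  exact abs_sub_le_of_nonneg_of_le h₂.1 h₂.2 h₁.1 h₁.2

lemma empError_coordSwap_sub {m : ℕ} (σ : Fin m → Bool)
    (p : (Fin m → X × Bool) × (Fin m → X × Bool)) (h : X → Bool) :
    empError (coordSwap σ p).2 h - empError (coordSwap σ p).1 h
      = rademacherSum σ (lossDiff p h) / m := by
  simp only [empError_eq_sum_div, ← sub_div, ← sum_sub_distrib, rademacherSum, lossDiff]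
  congr 1
  refine sum_congr rfl fun i _ => ?_
  cases hσ : σ i <;> simp [coordSwap, hσ]

lemma exists_finset_coe_eq_image_lossDiff {H : Set (X → Bool)} {d : ℕ}
    (hvc : ∀ A : Finset X, Shatters H A → A.card ≤ d) {m : ℕ}
    (p : (Fin m → X × Bool) × (Fin m → X × Bool)) :
    ∃ C : Finset (Fin m → ℝ), #C ≤ (2 * m + 1) ^ d ∧ ↑C = lossDiff p '' H := by
  classical
  -- `lossDiff p h` depends only on the restriction of `h` to the `2 m` sample points
  let pt : Fin m ⊕ Fin m → X := Sum.elim (fun i => (p.1 i).1) (fun i => (p.2 i).1)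
  let F : (Fin m ⊕ Fin m → Bool) → Fin m → ℝ := fun g i =>
    (if g (.inr i) = (p.2 i).2 then 0 else 1) - (if g (.inl i) = (p.1 i).2 then 0 else 1)
  have hfin : ((· ∘ pt) '' H).Finite := Set.toFinite _
  refine ⟨hfin.toFinset.image F, ?_, by rw [coe_image, hfin.coe_toFinset, Set.image_image]; rfl⟩
  calc #(hfin.toFinset.image F) ≤ ((· ∘ pt) '' H).ncard := by
        rw [Set.ncard_eq_toFinset_card _ hfin]
        exact card_image_le
    _ ≤ (Fintype.card (Fin m ⊕ Fin m) + 1) ^ d := ncard_image_comp_le hvc pt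
    _ = (2 * m + 1) ^ d := by simp [two_mul]

lemma card_lt_V_coordSwap_le {H : Set (X → Bool)} (hH : H.Nonempty) {d : ℕ}
    (hvc : ∀ A : Finset X, Shatters H A → A.card ≤ d) {m : ℕ} (hm : 0 < m)
    (p : (Fin m → X × Bool) × (Fin m → X × Bool)) {ε : ℝ} (hε : 0 < ε) :
    (#{σ | ε / 2 < V H m (coordSwap σ p)} : ℝ)
      ≤ (2 * m + 1) ^ d * (2 * 2 ^ m * exp (-(ε ^ 2 / 8 * m))) := by
  have hmR : (0 : ℝ) < m := Nat.cast_pos.2 hm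
  obtain ⟨C, hC, hC'⟩ := exists_finset_coe_eq_image_lossDiff hvc p
  have hsub : ({σ | ε / 2 < V H m (coordSwap σ p)} : Finset (Fin m → Bool))
      ⊆ C.biUnion fun c => {σ | m * ε / 2 ≤ |rademacherSum σ c|} := by
    intro σ hσ
    have hlt : ε / 2 < V H m (coordSwap σ p) := (mem_filter.1 hσ).2
    have := hH.to_subtype
    obtain ⟨⟨h, hh⟩, hlt⟩ := exists_lt_of_lt_ciSup hlt
    rw [empError_coordSwap_sub, abs_div, Nat.abs_cast, lt_div_iff₀ hmR] at hlt
    refine mem_biUnion.2 ⟨lossDiff p h, ?_, mem_filter.2 ⟨mem_univ _, by linarith⟩⟩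
    exact mem_coe.1 (hC' ▸ Set.mem_image_of_mem _ hh)
  have hcount : ∀ c ∈ C, (#{σ | m * ε / 2 ≤ |rademacherSum σ c|} : ℝ)
      ≤ 2 * 2 ^ m * exp (-(ε ^ 2 / 8 * m)) := by
    intro c hc
    obtain ⟨h, -, rfl⟩ := hC' ▸ mem_coe.2 hc
    have := card_le_abs_rademacherSum_le (abs_lossDiff_le_one p h)
      (by positivity : 0 ≤ m * ε / 2)
    rw [Fintype.card_fin] at this
    convert this using 3
    field_simp
    ring
  calc (#{σ | ε / 2 < V H m (coordSwap σ p)} : ℝ)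
      ≤ ∑ c ∈ C, (#{σ | m * ε / 2 ≤ |rademacherSum σ c|} : ℝ) := by
        exact_mod_cast (card_le_card hsub).trans card_biUnion_le
    _ ≤ #C * (2 * 2 ^ m * exp (-(ε ^ 2 / 8 * m))) := by
        simpa using sum_le_sum hcount
    _ ≤ (2 * m + 1) ^ d * (2 * 2 ^ m * exp (-(ε ^ 2 / 8 * m))) := by
        gcongr
        exact_mod_cast hC

lemma measure_lt_V_le [MeasurableSpace (X × Bool)] (D : Measure (X × Bool))
    [IsProbabilityMeasure D] {H : Set (X → Bool)} (hH : H.Nonempty) {d : ℕ}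
    (hvc : ∀ A : Finset X, Shatters H A → A.card ≤ d) {m : ℕ} (hm : 0 < m)
    (hV : Measurable (V H m)) {ε : ℝ} (hε : 0 < ε) :
    ((Measure.pi fun _ : Fin m => D).prod (Measure.pi fun _ : Fin m => D)) {p | ε / 2 < V H m p}
      ≤ ENNReal.ofReal (2 * (2 * m + 1) ^ d * exp (-(ε ^ 2 / 8 * m))) := by
  have hW : MeasurableSet {p | ε / 2 < V H m p} := measurableSet_lt measurable_const hV
  have := card_mul_measure_le_of_card_filter_le (measurePreserving_coordSwap D) hW fun p => by
    rw [← ENNReal.ofReal_natCast]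
    exact ENNReal.ofReal_le_ofReal (card_lt_V_coordSwap_le hH hvc hm p hε)
  have hcard : (Fintype.card (Fin m → Bool) : ℝ≥0∞) = ENNReal.ofReal (2 ^ m) := by simp
  rw [hcard, show (2 * m + 1 : ℝ) ^ d * (2 * 2 ^ m * exp (-(ε ^ 2 / 8 * m)))
    = 2 ^ m * (2 * (2 * m + 1) ^ d * exp (-(ε ^ 2 / 8 * m))) by ring,
    ENNReal.ofReal_mul (by positivity)] at this
  exact (ENNReal.mul_le_mul_iff_right (by simp) ENNReal.ofReal_ne_top).1 this

lemma measure_lt_U_le [MeasurableSpace (X × Bool)] (D : Measure (X × Bool))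
    [IsProbabilityMeasure D] {H : Set (X → Bool)} (hH : H.Nonempty)
    (hG : ∀ h ∈ H, MeasurableSet (graph h)) {d : ℕ}
    (hvc : ∀ A : Finset X, Shatters H A → A.card ≤ d) {m : ℕ} (hU : Measurable (U H m D))
    (hV : Measurable (V H m)) {ε : ℝ} (hε : 0 < ε) (hm : 8 ≤ m * ε ^ 2) :
    Measure.pi (fun _ : Fin m => D) {z | ε < U H m D z}
      ≤ ENNReal.ofReal (4 * (2 * m + 1) ^ d * exp (-(ε ^ 2 / 8 * m))) := by
  have hm₀ : 0 < m := Nat.cast_pos.1 (pos_of_mul_pos_left (by linarith) (sq_nonneg ε))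
  calc _ ≤ 2 * ((Measure.pi fun _ : Fin m => D).prod (Measure.pi fun _ : Fin m => D))
          {p | ε / 2 < V H m p} := measure_lt_U_le_two_mul_measure_lt_V D hH hG hU hV hε hm
    _ ≤ 2 * ENNReal.ofReal (2 * (2 * m + 1) ^ d * exp (-(ε ^ 2 / 8 * m))) := by
        gcongr
        exact measure_lt_V_le D hH hvc hm₀ hV hε
    _ = ENNReal.ofReal (4 * (2 * m + 1) ^ d * exp (-(ε ^ 2 / 8 * m))) := by
        rw [← ENNReal.ofReal_ofNat 2, ← ENNReal.ofReal_mul zero_le_two]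
        ring_nf

theorem finiteVC_implies_UCP_general
    {X : Type*} [MeasurableSpace (X × Bool)]
    (𝒟 : Set (Measure (X × Bool)))
    (h𝒟prob : ∀ D ∈ 𝒟, IsProbabilityMeasure D)
    (H : Set (X → Bool)) (hH : H.Nonempty)
    (hwb : WellBehaved H 𝒟)
    (hvc : FiniteVC H) :
    UCP H 𝒟 := by
  obtain ⟨hG, mH, hmH, hmeas⟩ := hwb
  obtain ⟨d, hd⟩ := hvc
  refine ⟨mH, hmH, fun m hm D hD => (hmeas m hm).2 D hD, ?_⟩
  rintro ε ⟨hε, -⟩ δ ⟨hδ, -⟩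
  have hlim := (tendsto_two_mul_add_one_pow_mul_exp_neg_mul d (b := ε ^ 2 / 8)
    (by positivity)).const_mul 4
  rw [mul_zero] at hlim
  obtain ⟨m₀, hm₀⟩ := eventually_atTop.1 <| (hlim.eventually (ge_mem_nhds hδ)).and <|
    (eventually_ge_atTop mH).and (tendsto_natCast_atTop_atTop.eventually_ge_atTop (8 / ε ^ 2))
  refine ⟨max m₀ mH, le_max_right _ _, fun m hm D hD => ?_⟩
  obtain ⟨hδm, hmHm, h8⟩ := hm₀ m (le_of_max_le_left hm)
  have := h𝒟prob D hD
  have hU := (hmeas m hmHm).2 D hD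
  have hbad := measure_lt_U_le D hH hG hd hU (hmeas m hmHm).1 hε
    ((div_le_iff₀ (by positivity)).1 h8)
  simpa only [Set.compl_ofPred, not_lt] using ofReal_one_sub_le_measure_compl
    (measurableSet_lt measurable_const hU) hδ.le
    (hbad.trans (ENNReal.ofReal_le_ofReal (by linarith)))

/-- A well-behaved hypothesis space with finite VC dimension has the uniform
convergence property. -/
theorem finiteVC_implies_UCP
    {X : Type*} [Nonempty X] [MeasurableSpace (X × Bool)]
    (𝒟 : Set (Measure (X × Bool)))
    (h𝒟prob : ∀ D ∈ 𝒟, IsProbabilityMeasure D)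
    (H : Set (X → Bool)) (hH : H.Nonempty)
    (hwb : WellBehaved H 𝒟)
    (hvc : FiniteVC H) :
    UCP H 𝒟 :=
  finiteVC_implies_UCP_general 𝒟 h𝒟prob H hH hwb hvc

end PAC
end

section
/- Let X be a non-empty set, let Σ_Z be a σ-algebra on Z = X × {0,1}, let 𝒟 be a set of probability measures on (Z, Σ_Z), and let H ⊆ {0,1}^X be a non-empty hypothesis space that is well-behaved with respect to 𝒟. If H has the uniform convergence property with respect to 𝒟, then every learning function for H that is NMSE is PAC with respect to 𝒟. -/
open MeasureTheory

namespace PAC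

variable {X : Type*}

/-!
On the event `U ≤ ε/3`, which by uniform convergence has probability at least `1 - δ` once
`m` is large, the chain `er(A z) ≤ êr(A z) + ε/3 ≤ êopt + 2ε/3 ≤ opt + ε` holds: the middle
step is the NMSE property with tolerance `ε/3`, the outer ones are uniform convergence applied
to `A z` and to every `h ∈ H`.
-/

lemma empError_nonneg {m : ℕ} (z : Fin m → X × Bool) (h : X → Bool) : 0 ≤ empError z h := by
  unfold empError
  positivity

lemma empError_le_one {m : ℕ} (z : Fin m → X × Bool) (h : X → Bool) : empError z h ≤ 1 := by
  unfold empError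
  apply div_le_one_of_le₀ _ m.cast_nonneg
  exact_mod_cast (Finset.card_filter_le _ _).trans_eq (Finset.card_fin m)

lemma empOpt_le_empError {m : ℕ} (z : Fin m → X × Bool) {H : Set (X → Bool)} {h : X → Bool}
    (hh : h ∈ H) : empOpt z H ≤ empError z h :=
  ciInf_le ⟨0, by rintro _ ⟨g, rfl⟩; exact empError_nonneg z g⟩ (⟨h, hh⟩ : H)

section TrueError

variable [MeasurableSpace (X × Bool)]

lemma trueError_nonneg (D : Measure (X × Bool)) (h : X → Bool) : 0 ≤ trueError D h :=
  ENNReal.toReal_nonneg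

lemma trueError_le_one (D : Measure (X × Bool)) [IsProbabilityMeasure D] (h : X → Bool) :
    trueError D h ≤ 1 :=
  ENNReal.toReal_le_of_le_ofReal zero_le_one (by simpa using prob_le_one)

lemma abs_trueError_sub_empError_le_U (D : Measure (X × Bool)) [IsProbabilityMeasure D]
    {m : ℕ} (z : Fin m → X × Bool) {H : Set (X → Bool)} {h : X → Bool} (hh : h ∈ H) :
    |trueError D h - empError z h| ≤ U H m D z := by
  unfold U
  refine le_ciSup (f := fun g : H => |trueError D g - empError z g|) ⟨1, ?_⟩ (⟨h, hh⟩ : H)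
  rintro _ ⟨g, rfl⟩
  simpa using abs_sub_le_of_le_of_le (trueError_nonneg D g) (trueError_le_one D g)
    (empError_nonneg z g) (empError_le_one z g)

lemma trueError_sub_optError_le (D : Measure (X × Bool)) [IsProbabilityMeasure D]
    {m : ℕ} {z : Fin m → X × Bool} {H : Set (X → Bool)} {a : X → Bool} (ha : a ∈ H)
    {η θ : ℝ} (hU : U H m D z ≤ η) (hopt : empError z a - empOpt z H ≤ θ) :
    trueError D a - optError D H ≤ θ + 2 * η := by
  have : Nonempty H := ⟨⟨a, ha⟩⟩
  have ha_close := (abs_le.mp ((abs_trueError_sub_empError_le_U D z ha).trans hU)).2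
  have hopt_close : empOpt z H - η ≤ optError D H := le_ciInf fun h => by
    have h_close := (abs_le.mp ((abs_trueError_sub_empError_le_U D z h.2).trans hU)).1
    linarith [empOpt_le_empError z h.2]
  linarith

end TrueError

theorem UCP_implies_NMSE_is_PAC_general
    {X : Type*} [MeasurableSpace (X × Bool)]
    (𝒟 : Set (Measure (X × Bool)))
    (h𝒟prob : ∀ D ∈ 𝒟, IsProbabilityMeasure D)
    (H : Set (X → Bool))
    (hucp : UCP H 𝒟) :
    ∀ A : ∀ m : ℕ, (Fin m → X × Bool) → (X → Bool),
      IsLearningFunction H A → IsNMSE H A → IsPAC H 𝒟 A := by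
  intro A hA hnmse ε hε δ hδ
  obtain ⟨mH, hmH, hU_meas, hconv⟩ := hucp
  have hε3 : ε / 3 ∈ Set.Ioo (0 : ℝ) 1 := ⟨by linarith [hε.1], by linarith [hε.2]⟩
  obtain ⟨m₀, hm₀, hconv⟩ := hconv (ε / 3) hε3 δ hδ
  obtain ⟨m₁, -, hnmse⟩ := hnmse (ε / 3) hε3
  refine ⟨max m₀ m₁, by omega, fun m hm D hD =>
    ⟨{z | U H m D z ≤ ε / 3}, hU_meas m (by omega) D hD measurableSet_Iic, fun z hz => ?_,
      hconv m (by omega) D hD⟩⟩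
  have := h𝒟prob D hD
  have := trueError_sub_optError_le D (hA m z) hz (hnmse m (by omega) z)
  show trueError D (A m z) - optError D H ≤ ε
  linarith

/-- If a well-behaved hypothesis space has the uniform convergence property, then
every learning function for it that nearly minimizes the sample error is PAC. -/
theorem UCP_implies_NMSE_is_PAC
    {X : Type*} [Nonempty X] [MeasurableSpace (X × Bool)]
    (𝒟 : Set (Measure (X × Bool)))
    (h𝒟prob : ∀ D ∈ 𝒟, IsProbabilityMeasure D)
    (H : Set (X → Bool)) (hH : H.Nonempty)
    (hwb : WellBehaved H 𝒟)
    (hucp : UCP H 𝒟) :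
    ∀ A : ∀ m : ℕ, (Fin m → X × Bool) → (X → Bool),
      IsLearningFunction H A → IsNMSE H A → IsPAC H 𝒟 A :=
  UCP_implies_NMSE_is_PAC_general 𝒟 h𝒟prob H hucp

end PAC
end

section
/- Let X be a non-empty set, let Σ_Z be a σ-algebra on Z = X × {0,1} containing all finite subsets of Z, and let 𝒟 be a set of probability measures on (Z, Σ_Z) containing all discrete uniform distributions. Let H ⊆ {0,1}^X be a non-empty hypothesis space with Γ(h) ∈ Σ_Z for every h ∈ H. If H is PAC learnable with respect to 𝒟, then H has finite VC dimension. -/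
/-! No free lunch. Suppose `H` shatters a finite set `S` with `|S| > 2m`. For a labelling
`f : S → Bool` let `D_f` be the uniform distribution on `{(a, f a) : a ∈ S}`; it is realised
by `H`, so `opt_{D_f}(H) = 0`. A sample of size `m` shows the learner at most half of `S`, and
flipping `f` at an unseen point leaves the learner's output unchanged while toggling whether
it errs there. Averaging over all labellings and all `|S|^m` equally likely index tuples, some
`f` makes the learner err on more than `|S|/8` points for at least `1/8` of the samples. Hence
its error exceeds `1/8` with probability at least `1/8`, which is incompatible with PAC
learning at `ε = 1/8`, `δ = 1/16`. -/

open MeasureTheory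

namespace PAC

variable {X : Type*}

open Finset

section UniformMeasure

variable {α ι κ : Type*} [MeasurableSpace α] [Fintype ι]

noncomputable def uniformMeasure (z : ι → α) : Measure α :=
  (Fintype.card ι : ENNReal)⁻¹ • ∑ i, Measure.dirac (z i)

open scoped Classical in
theorem uniformMeasure_apply (z : ι → α) {s : Set α} (hs : MeasurableSet s) :
    uniformMeasure z s = (Fintype.card ι : ENNReal)⁻¹ * #{i | z i ∈ s} := by
  simp [uniformMeasure, Measure.dirac_apply' _ hs, Set.indicator_apply, Finset.sum_boole]

instance [Nonempty ι] (z : ι → α) : IsProbabilityMeasure (uniformMeasure z) :=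
  ⟨by rw [uniformMeasure_apply z .univ]; simp [ENNReal.inv_mul_cancel]⟩

open scoped Classical in
theorem uniformMeasure_toReal_apply (z : ι → α) {s : Set α} (hs : MeasurableSet s) :
    (uniformMeasure z s).toReal = #{i | z i ∈ s} / Fintype.card ι := by
  rw [uniformMeasure_apply z hs, ENNReal.toReal_mul]
  simp [div_eq_inv_mul]

theorem pi_uniformMeasure [Nonempty ι] [Fintype κ] [DecidableEq κ] (z : ι → α) :
    Measure.pi (fun _ : κ => uniformMeasure z)
      = uniformMeasure fun (j : κ → ι) k => z (j k) := by
  classical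
  refine Measure.pi_eq fun s hs => ?_
  have hpi : #{j : κ → ι | (fun k => z (j k)) ∈ Set.univ.pi s}
      = #(Fintype.piFinset fun k => ({i | z i ∈ s k} : Finset ι)) := by
    congr 1; ext j; simp
  rw [uniformMeasure_apply _ (.univ_pi hs), hpi, Fintype.card_piFinset, Fintype.card_fun]
  simp only [uniformMeasure_apply z (hs _), Finset.prod_mul_distrib, Finset.prod_const,
    Finset.card_univ]
  push_cast
  rw [ENNReal.inv_pow]

theorem isDiscreteUniform_uniformMeasure {X : Type*} [MeasurableSpace (X × Bool)] [Nonempty ι]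
    (z : ι → X × Bool) : IsDiscreteUniform (uniformMeasure z) :=
  ⟨Fintype.card ι, Fintype.card_pos, z ∘ (Fintype.equivFin ι).symm, by
    rw [uniformMeasure, ← (Fintype.equivFin ι).symm.sum_comp]; rfl⟩

end UniformMeasure

theorem _root_.Finset.card_mul_le_eight_mul_card_filter_mul {α : Type*} {s : Finset α}
    {a : α → ℕ} {b : ℕ} (hab : ∀ x ∈ s, a x ≤ b)
    (hs : #s * b ≤ 4 * ∑ x ∈ s, a x) :
    #s * b ≤ 8 * #{x ∈ s | b < 8 * a x} * b := by
  have hlarge : ∑ x ∈ s with b < 8 * a x, a x ≤ #{x ∈ s | b < 8 * a x} * b := by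
    simpa using Finset.sum_le_sum fun x hx => hab x (Finset.mem_filter.1 hx).1
  have hsmall : 8 * ∑ x ∈ s with ¬b < 8 * a x, a x ≤ #s * b :=
    calc 8 * ∑ x ∈ s with ¬b < 8 * a x, a x
        = ∑ x ∈ s with ¬b < 8 * a x, 8 * a x := Finset.mul_sum _ _ _
      _ ≤ ∑ x ∈ s with ¬b < 8 * a x, b := Finset.sum_le_sum fun x hx => by
          simpa using (Finset.mem_filter.1 hx).2
      _ ≤ #s * b := by simpa using Nat.mul_le_mul_right b (Finset.card_filter_le _ _)
  have hsplit := Finset.sum_filter_add_sum_filter_not s (fun x => b < 8 * a x) a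
  linarith

section NoFreeLunch

/- `guess f j` models a learner's prediction on all points after it has seen the points `j k`
labelled by `f`; the hypothesis `hguess` says that it sees nothing else of `f`. -/
variable {ι κ : Type*} [Fintype ι] [DecidableEq ι]
  {guess : (ι → Bool) → (κ → ι) → ι → Bool}

theorem two_mul_card_guess_ne_eq
    (hguess : ∀ f f' j, (∀ k, f (j k) = f' (j k)) → guess f j = guess f' j)
    {j : κ → ι} {i : ι} (hi : i ∉ Set.range j) :
    2 * #{f | guess f j i ≠ f i} = 2 ^ Fintype.card ι := by
  set flip : (ι → Bool) → (ι → Bool) := fun f => Function.update f i (!f i)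
  have hflip_flip : ∀ f, flip (flip f) = f := fun f => by simp [flip]
  have hguess_flip : ∀ f, guess (flip f) j = guess f j := fun f =>
    hguess _ _ j fun k => Function.update_of_ne (fun h => hi ⟨k, h⟩) _ _
  have hmistake_flip : ∀ f, guess (flip f) j i = flip f i ↔ guess f j i ≠ f i := fun f => by
    simp only [hguess_flip, flip, Function.update_self]
    cases guess f j i <;> cases f i <;> decide
  have hcard : #{f | guess f j i ≠ f i} = #{f | ¬guess f j i ≠ f i} :=
    Finset.card_nbij' flip flip (fun f hf => by simpa [hmistake_flip] using hf)
      (fun f hf => by simpa [hmistake_flip] using hf)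
      (fun f _ => hflip_flip f) (fun f _ => hflip_flip f)
  rw [two_mul]
  nth_rw 2 [hcard]
  rw [Finset.card_filter_add_card_filter_not, Finset.card_univ, Fintype.card_fun,
    Fintype.card_bool]

theorem card_sub_mul_two_pow_le_sum_card_guess_ne [Fintype κ]
    (hguess : ∀ f f' j, (∀ k, f (j k) = f' (j k)) → guess f j = guess f' j) (j : κ → ι) :
    (Fintype.card ι - Fintype.card κ) * 2 ^ Fintype.card ι
      ≤ 2 * ∑ f, #{i | guess f j i ≠ f i} := by
  have hunseen : Fintype.card ι - Fintype.card κ ≤ #(univ \ univ.image j) := by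
    rw [Finset.card_sdiff_of_subset (Finset.subset_univ _), Finset.card_univ]
    exact Nat.sub_le_sub_left (Finset.card_image_le.trans_eq (Finset.card_univ)) _
  calc (Fintype.card ι - Fintype.card κ) * 2 ^ Fintype.card ι
      ≤ #(univ \ univ.image j) * 2 ^ Fintype.card ι := Nat.mul_le_mul_right _ hunseen
    _ = ∑ i ∈ univ \ univ.image j, 2 * #{f | guess f j i ≠ f i} := by
        rw [← smul_eq_mul, ← Finset.sum_const]
        refine Finset.sum_congr rfl fun i hi => (two_mul_card_guess_ne_eq hguess ?_).symm
        simpa using hi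
    _ ≤ ∑ i, 2 * #{f | guess f j i ≠ f i} :=
        Finset.sum_le_sum_of_subset (Finset.subset_univ _)
    _ = 2 * ∑ f, #{i | guess f j i ≠ f i} := by
        simp only [← Finset.mul_sum, Finset.card_filter]
        rw [Finset.sum_comm]

theorem exists_labeling_le_four_mul_sum_card_guess_ne [Fintype κ] [DecidableEq κ]
    (hguess : ∀ f f' j, (∀ k, f (j k) = f' (j k)) → guess f j = guess f' j)
    (hκι : 2 * Fintype.card κ ≤ Fintype.card ι) :
    ∃ f, Fintype.card ι ^ Fintype.card κ * Fintype.card ι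
      ≤ 4 * ∑ j, #{i | guess f j i ≠ f i} := by
  set n := Fintype.card ι
  obtain ⟨f, -, hf⟩ := Finset.exists_le_of_sum_le (s := univ) univ_nonempty
    (f := fun _ => n ^ Fintype.card κ * n)
    (g := fun f => 4 * ∑ j, #{i | guess f j i ≠ f i}) <| by
    calc ∑ _f : ι → Bool, n ^ Fintype.card κ * n
        = 2 ^ n * (n ^ Fintype.card κ * n) := by simp [n]
      _ ≤ 2 ^ n * (n ^ Fintype.card κ * (2 * (n - Fintype.card κ))) := by gcongr; omega
      _ = 2 * ∑ _j : κ → ι, (n - Fintype.card κ) * 2 ^ n := by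
          simp [n]; ring
      _ ≤ 2 * ∑ j, 2 * ∑ f, #{i | guess f j i ≠ f i} :=
          Nat.mul_le_mul_left _ <| Finset.sum_le_sum fun j _ =>
            card_sub_mul_two_pow_le_sum_card_guess_ne hguess j
      _ = ∑ f, 4 * ∑ j, #{i | guess f j i ≠ f i} := by
          simp only [Finset.mul_sum, ← mul_assoc]
          exact Finset.sum_comm
  exact ⟨f, hf⟩

theorem exists_labeling_many_bad_samples [Nonempty ι] [Fintype κ] [DecidableEq κ]
    (hguess : ∀ f f' j, (∀ k, f (j k) = f' (j k)) → guess f j = guess f' j)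
    (hκι : 2 * Fintype.card κ ≤ Fintype.card ι) :
    ∃ f, Fintype.card ι ^ Fintype.card κ
      ≤ 8 * #{j | Fintype.card ι < 8 * #{i | guess f j i ≠ f i}} := by
  obtain ⟨f, hf⟩ := exists_labeling_le_four_mul_sum_card_guess_ne hguess hκι
  refine ⟨f, Nat.le_of_mul_le_mul_right ?_ (Fintype.card_pos (α := ι))⟩
  have hmarkov := Finset.card_mul_le_eight_mul_card_filter_mul (s := univ)
    (a := fun j : κ → ι => #{i | guess f j i ≠ f i}) (fun j _ => card_filter_le _ _)
    (by rwa [card_univ, Fintype.card_fun])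
  rwa [card_univ, Fintype.card_fun] at hmarkov

end NoFreeLunch

theorem Shatters.exists_eq {X : Type*} {H : Set (X → Bool)} {S : Finset X} (hS : Shatters H S)
    (f : S → Bool) : ∃ h ∈ H, ∀ a : S, h a = f a := by
  classical
  obtain ⟨h, hh, hhS⟩ := hS fun x => if hx : x ∈ S then f ⟨x, hx⟩ else false
  exact ⟨h, hh, fun a => by simp [hhS a a.2]⟩

section Errors

variable {X : Type*} [MeasurableSpace (X × Bool)]

theorem trueError_uniformMeasure {ι : Type*} [Fintype ι] (z : ι → X × Bool) {g : X → Bool}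
    (hg : MeasurableSet (graph g)) :
    trueError (uniformMeasure z) g = #{i | g (z i).1 ≠ (z i).2} / Fintype.card ι := by
  classical
  rw [trueError, show {z : X × Bool | g z.1 ≠ z.2} = (graph g)ᶜ from rfl,
    uniformMeasure_toReal_apply z hg.compl]
  congr

theorem optError_uniformMeasure_eq_zero {ι : Type*} [Fintype ι] (z : ι → X × Bool)
    {H : Set (X → Bool)} {h : X → Bool} (hh : h ∈ H) (hg : MeasurableSet (graph h))
    (hz : ∀ i, h (z i).1 = (z i).2) : optError (uniformMeasure z) H = 0 := by
  have : Nonempty H := ⟨⟨h, hh⟩⟩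
  refine le_antisymm ?_ (le_ciInf fun _ => ENNReal.toReal_nonneg)
  calc optError (uniformMeasure z) H ≤ trueError (uniformMeasure z) h :=
        ciInf_le (f := fun h : H => trueError (uniformMeasure z) h.1)
          ⟨0, Set.forall_mem_range.2 fun _ => ENNReal.toReal_nonneg⟩ ⟨h, hh⟩
    _ = 0 := by simp [trueError_uniformMeasure z hg, hz]

theorem exists_labeling_pi_uniformMeasure_le {ι : Type*} [Fintype ι] [Nonempty ι] {m : ℕ}
    (hm : 2 * m ≤ Fintype.card ι) (x : ι → X) (A : (Fin m → X × Bool) → X → Bool)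
    (hA : ∀ z, MeasurableSet (graph (A z))) :
    ∃ f : ι → Bool, ∀ C, MeasurableSet C →
      C ⊆ {z | trueError (uniformMeasure fun i => (x i, f i)) (A z) ≤ 1 / 8} →
      (Measure.pi (fun _ : Fin m => uniformMeasure fun i => (x i, f i)) C).toReal ≤ 7 / 8 := by
  classical
  let sample (f : ι → Bool) (j : Fin m → ι) : Fin m → X × Bool :=
    fun k => (x (j k), f (j k))
  obtain ⟨f, hbad⟩ := exists_labeling_many_bad_samples
    (guess := fun f j i => A (sample f j) (x i)) (fun f f' j h => by simp only [sample, h])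
    (by simpa using hm)
  refine ⟨f, fun C hC hCgood => ?_⟩
  set n := Fintype.card ι with hn
  have hCbad : ({j | sample f j ∈ C} : Finset (Fin m → ι))
      ⊆ ({j | ¬n < 8 * #{i | A (sample f j) (x i) ≠ f i}} : Finset _) := by
    intro j hj
    have hgood := hCgood (Finset.mem_filter.1 hj).2
    rw [Set.mem_ofPred_eq, trueError_uniformMeasure _ (hA _),
      div_le_iff₀ (by positivity)] at hgood
    simp only [Finset.mem_filter, Finset.mem_univ, true_and, not_lt]
    exact_mod_cast (by linarith :
      (8 : ℝ) * (#{i | A (sample f j) (x i) ≠ f i} : ℕ) ≤ (n : ℕ))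
  have hsplit := Finset.card_filter_add_card_filter_not (s := (univ : Finset (Fin m → ι)))
    (fun j => n < 8 * #{i | A (sample f j) (x i) ≠ f i})
  have := Finset.card_le_card hCbad
  simp only [Finset.card_univ, Fintype.card_fun, Fintype.card_fin, ← hn] at hbad hsplit
  have hcount : (8 : ℝ) * #{j | sample f j ∈ C} ≤ 7 * n ^ m := by
    exact_mod_cast (by omega : 8 * #{j | sample f j ∈ C} ≤ 7 * n ^ m)
  rw [pi_uniformMeasure, uniformMeasure_toReal_apply _ hC, Fintype.card_fun, Fintype.card_fin,
    div_le_iff₀ (by positivity)]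
  push_cast
  linarith

end Errors

theorem PAC_implies_finiteVC_general
    {X : Type*} [MeasurableSpace (X × Bool)]
    (𝒟 : Set (Measure (X × Bool)))
    (h𝒟unif : ∀ D : Measure (X × Bool), IsDiscreteUniform D → D ∈ 𝒟)
    (H : Set (X → Bool))
    (hgraph : ∀ h ∈ H, MeasurableSet (graph h))
    (hpac : PACLearnable H 𝒟) :
    FiniteVC H := by
  obtain ⟨A, hAH, hA⟩ := hpac
  obtain ⟨m, -, hm⟩ :=
    hA (1 / 8) ⟨by norm_num, by norm_num⟩ (1 / 16) ⟨by norm_num, by norm_num⟩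
  refine ⟨2 * m, fun S hS => ?_⟩
  by_contra! hSm
  have : Nonempty S := Finset.Nonempty.to_subtype (Finset.card_pos.1 (by omega))
  obtain ⟨f, hf⟩ := exists_labeling_pi_uniformMeasure_le (by simpa using hSm.le)
    (fun a : S => (a : X)) (A m) fun z => hgraph _ (hAH m z)
  obtain ⟨h, hh, hhS⟩ := hS.exists_eq f
  have hopt := optError_uniformMeasure_eq_zero (fun a : S => ((a : X), f a)) hh (hgraph h hh) hhS
  obtain ⟨C, hC, hCgood, hCprob⟩ :=
    hm m le_rfl _ (h𝒟unif _ (isDiscreteUniform_uniformMeasure fun a : S => ((a : X), f a)))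
  have hfail := hf C hC fun z hz => by simpa [hopt] using hCgood hz
  have hsucc := (ENNReal.ofReal_le_iff_le_toReal (measure_ne_top _ _)).1 hCprob
  linarith

/-- If a hypothesis space (with measurable graphs) is PAC learnable with respect to
a set of distributions containing all discrete uniform distributions, then it has
finite VC dimension. -/
theorem PAC_implies_finiteVC
    {X : Type*} [Nonempty X] [MeasurableSpace (X × Bool)]
    (hfin : ∀ z : X × Bool, MeasurableSet {z})
    (𝒟 : Set (Measure (X × Bool)))
    (h𝒟prob : ∀ D ∈ 𝒟, IsProbabilityMeasure D)
    (h𝒟unif : ∀ D : Measure (X × Bool), IsDiscreteUniform D → D ∈ 𝒟)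
    (H : Set (X → Bool)) (hH : H.Nonempty)
    (hgraph : ∀ h ∈ H, MeasurableSet (graph h))
    (hpac : PACLearnable H 𝒟) :
    FiniteVC H :=
  PAC_implies_finiteVC_general 𝒟 h𝒟unif H hgraph hpac

end PAC
end

section
/- Let L be a first-order language and let M be an L-structure with domain M. Then the following are equivalent: (1) M has NIP (every L-formula has NIP over M); (2) for every n ∈ ℕ, every non-empty definable set X ⊆ M^n and every L-formula φ(x_1,…,x_n; p_1,…,p_ℓ), the hypothesis space H^φ_X = {h↾X : h ∈ H^φ} has finite VC dimension; (3) for every L-formula φ(x_1,…,x_n; p_1,…,p_ℓ), the hypothesis space H^φ has finite VC dimension. -/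
/-!
NIP of `φ` with witness `m` says that no `m` points `a₁, …, aₘ` of `Mⁿ` have, for every
`J ⊆ {1, …, m}`, a parameter `w_J` cutting out exactly `{aᵢ : i ∈ J}`; that is, no `m` points are
shattered by `H^φ`, so NIP of `φ` is finiteness of `vc(H^φ)`. Restricting to `X ⊆ Mⁿ` can only
lower the VC dimension, and `X = Mⁿ` is definable (by `⊤`) and non-empty unless `Mⁿ` is empty,
where every hypothesis space has VC dimension `0`.
-/

open FirstOrder

namespace NIPVC

/-- `H` shatters the finite set `A ⊆ Y`. -/
def Shatters {Y : Type*} (H : Set (Y → Bool)) (A : Finset Y) : Prop :=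
  ∀ f : Y → Bool, ∃ h ∈ H, ∀ x ∈ A, h x = f x

/-- `vc(H) < ∞`. -/
def FiniteVC {Y : Type*} (H : Set (Y → Bool)) : Prop :=
  ∃ d : ℕ, ∀ A : Finset Y, Shatters H A → A.card ≤ d

variable {L : FirstOrder.Language} {M : Type*} [Nonempty M] [L.Structure M]

/-- The hypothesis space `H^φ = {1_{φ(M;w)} : w ∈ M^ℓ}` of a partitioned formula
`φ(x₁,…,xₙ; p₁,…,p_ℓ)`, as a set of `{0,1}`-valued functions on `Mⁿ`. -/
def HypSpace (M : Type*) [L.Structure M] {n ℓ : ℕ}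
    (φ : L.Formula (Fin n ⊕ Fin ℓ)) : Set ((Fin n → M) → Bool) :=
  {h | ∃ w : Fin ℓ → M, ∀ a : Fin n → M, (h a = true ↔ φ.Realize (Sum.elim a w))}

/-- The restricted hypothesis space `H^φ_X = {h↾X : h ∈ H^φ}`. -/
def HypSpaceRestrict (M : Type*) [L.Structure M] {n ℓ : ℕ}
    (φ : L.Formula (Fin n ⊕ Fin ℓ)) (Xs : Set (Fin n → M)) :
    Set (↥Xs → Bool) :=
  {g | ∃ h ∈ HypSpace M φ, ∀ x : ↥Xs, g x = h ↑x}

/-- The partitioned formula `φ(x; p)` has NIP over `M`. -/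
def FormulaNIP (M : Type*) [L.Structure M] {n ℓ : ℕ}
    (φ : L.Formula (Fin n ⊕ Fin ℓ)) : Prop :=
  ∃ m : ℕ, 0 < m ∧
    ∀ (a : Fin m → Fin n → M) (w : Finset (Fin m) → Fin ℓ → M),
      ∃ J : Finset (Fin m),
        ¬ ((∀ i ∈ J, φ.Realize (Sum.elim (a i) (w J))) ∧
          (∀ i ∉ J, ¬ φ.Realize (Sum.elim (a i) (w J))))

/-- A set `A ⊆ Mⁿ` is definable over `M` (with parameters). -/
def IsDefinableSet (L : FirstOrder.Language) (M : Type*) [L.Structure M] (n : ℕ)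
    (A : Set (Fin n → M)) : Prop :=
  ∃ (k : ℕ) (ψ : L.Formula (Fin n ⊕ Fin k)) (w : Fin k → M),
    A = {a | ψ.Realize (Sum.elim a w)}

open Function

section Shattering

variable {ι Y Z : Type*} {H : Set (Y → Bool)}

/-- Shattering of a family of points rather than of a set: the form it takes in `FormulaNIP`. -/
def ShattersFamily (H : Set (Y → Bool)) (a : ι → Y) : Prop :=
  ∀ J : Finset ι, ∃ h ∈ H, ∀ i, h (a i) = true ↔ i ∈ J

theorem ShattersFamily.injective {a : ι → Y} (ha : ShattersFamily H a) : Injective a := by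
  intro i j hij
  obtain ⟨h, -, hh⟩ := ha {i}
  have hj : j ∈ ({i} : Finset ι) := by rw [← hh, ← hij, hh]; exact Finset.mem_singleton_self i
  exact (Finset.mem_singleton.mp hj).symm

theorem ShattersFamily.shatters_map [Fintype ι] {a : ι → Y} (ha : ShattersFamily H a) :
    Shatters H (Finset.univ.map ⟨a, ha.injective⟩) := by
  classical
  intro f
  obtain ⟨h, hH, hh⟩ := ha (Finset.univ.filter fun i => f (a i) = true)
  refine ⟨h, hH, ?_⟩
  simp only [Finset.mem_map, Finset.mem_univ, true_and, Embedding.coeFn_mk]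
  rintro _ ⟨i, rfl⟩
  exact Bool.eq_iff_iff.mpr (by simpa using hh i)

theorem Shatters.shattersFamily {A : Finset Y} (hA : Shatters H A) (e : ι ↪ A) :
    ShattersFamily H (fun i => (e i : Y)) := by
  classical
  intro J
  obtain ⟨h, hH, hh⟩ := hA fun y => decide (∃ j ∈ J, (e j : Y) = y)
  refine ⟨h, hH, fun i => ?_⟩
  rw [hh _ (e i).2, decide_eq_true_iff]
  exact ⟨fun ⟨j, hj, hji⟩ => e.injective (Subtype.ext hji) ▸ hj, fun hi => ⟨i, hi, rfl⟩⟩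

theorem FiniteVC.exists_forall_not_shattersFamily (hH : FiniteVC H) :
    ∃ d : ℕ, ∀ a : Fin (d + 1) → Y, ¬ ShattersFamily H a := by
  obtain ⟨d, hd⟩ := hH
  refine ⟨d, fun a ha => ?_⟩
  simpa using hd _ ha.shatters_map

theorem finiteVC_of_forall_not_shattersFamily (m : ℕ)
    (hm : ∀ a : Fin m → Y, ¬ ShattersFamily H a) : FiniteVC H := by
  refine ⟨m, fun A hA => ?_⟩
  by_contra! hlt
  exact hm _ (hA.shattersFamily ((Fin.castLEEmb hlt.le).trans A.equivFin.symm.toEmbedding))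

theorem FiniteVC.of_isEmpty [IsEmpty Y] (H : Set (Y → Bool)) : FiniteVC H :=
  ⟨0, fun A _ => by simp [Finset.eq_empty_of_isEmpty A]⟩

theorem shatters_comp_iff (e : Z ↪ Y) {A : Finset Z} :
    Shatters ((· ∘ e) '' H) A ↔ Shatters H (A.map e) := by
  constructor
  · intro hA f
    obtain ⟨_, ⟨h, hH, rfl⟩, hh⟩ := hA (f ∘ e)
    refine ⟨h, hH, ?_⟩
    simp only [Finset.mem_map]
    rintro _ ⟨z, hz, rfl⟩
    exact hh z hz
  · intro hA f
    obtain ⟨h, hH, hh⟩ := hA (extend e f fun _ => false)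
    refine ⟨h ∘ e, ⟨h, hH, rfl⟩, fun z hz => ?_⟩
    rw [comp_apply, hh _ (Finset.mem_map_of_mem e hz), e.injective.extend_apply]

theorem FiniteVC.comp_embedding (e : Z ↪ Y) (hH : FiniteVC H) : FiniteVC ((· ∘ e) '' H) := by
  obtain ⟨d, hd⟩ := hH
  exact ⟨d, fun A hA => by simpa using hd _ ((shatters_comp_iff e).mp hA)⟩

theorem finiteVC_comp_equiv_iff (e : Z ≃ Y) : FiniteVC ((· ∘ e) '' H) ↔ FiniteVC H := by
  refine ⟨fun ⟨d, hd⟩ => ⟨d, fun A hA => ?_⟩, FiniteVC.comp_embedding e.toEmbedding⟩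
  have hA' : Shatters ((· ∘ e) '' H) (A.map e.symm.toEmbedding) := by
    rw [← Equiv.coe_toEmbedding, shatters_comp_iff, Finset.map_map]
    simpa using hA
  simpa using hd _ hA'

end Shattering

section Formula

variable {L : FirstOrder.Language} {M : Type*} [L.Structure M] {n ℓ : ℕ}
  {φ : L.Formula (Fin n ⊕ Fin ℓ)}

theorem shattersFamily_hypSpace_iff {ι : Type*} {a : ι → Fin n → M} :
    ShattersFamily (HypSpace M φ) a ↔
      ∀ J : Finset ι, ∃ w : Fin ℓ → M, ∀ i, φ.Realize (Sum.elim (a i) w) ↔ i ∈ J := by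
  classical
  refine forall_congr' fun J => ⟨?_, ?_⟩
  · rintro ⟨h, ⟨w, hw⟩, hh⟩
    exact ⟨w, fun i => (hw (a i)).symm.trans (hh i)⟩
  · rintro ⟨w, hw⟩
    exact ⟨fun x => decide (φ.Realize (Sum.elim x w)), ⟨w, fun x => decide_eq_true_iff⟩,
      fun i => decide_eq_true_iff.trans (hw i)⟩

theorem formulaNIP_iff :
    FormulaNIP M φ ↔ ∃ m : ℕ, 0 < m ∧ ∀ a : Fin m → Fin n → M,
      ¬ ShattersFamily (HypSpace M φ) a := by
  refine exists_congr fun m => and_congr_right fun _ => forall_congr' fun a => ?_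
  have separates_iff (J : Finset (Fin m)) (p : Fin m → Prop) :
      ((∀ i ∈ J, p i) ∧ ∀ i ∉ J, ¬ p i) ↔ ∀ i, p i ↔ i ∈ J :=
    ⟨fun h i => ⟨fun hp => by_contra fun hi => h.2 i hi hp, h.1 i⟩,
      fun h => ⟨fun i => (h i).mpr, fun i hi hp => hi ((h i).mp hp)⟩⟩
  rw [shattersFamily_hypSpace_iff,
    Classical.skolem (p := fun J w => ∀ i, φ.Realize (Sum.elim (a i) w) ↔ i ∈ J)]
  simp only [separates_iff, not_exists, not_forall]

theorem formulaNIP_iff_finiteVC : FormulaNIP M φ ↔ FiniteVC (HypSpace M φ) := by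
  rw [formulaNIP_iff]
  constructor
  · rintro ⟨m, -, hm⟩
    exact finiteVC_of_forall_not_shattersFamily m hm
  · intro hH
    obtain ⟨d, hd⟩ := hH.exists_forall_not_shattersFamily
    exact ⟨d + 1, d.succ_pos, hd⟩

theorem hypSpaceRestrict_eq (Xs : Set (Fin n → M)) :
    HypSpaceRestrict M φ Xs = (· ∘ Embedding.subtype (· ∈ Xs)) '' HypSpace M φ := by
  ext g
  simp only [HypSpaceRestrict, Set.mem_image, funext_iff, comp_apply, Embedding.subtype_apply]
  exact ⟨fun ⟨h, hH, hg⟩ => ⟨h, hH, fun x => (hg x).symm⟩,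
    fun ⟨h, hH, hg⟩ => ⟨h, hH, fun x => (hg x).symm⟩⟩

theorem isDefinableSet_univ : IsDefinableSet L M n Set.univ :=
  ⟨0, ⊤, Fin.elim0, by ext; simp⟩

end Formula

theorem nip_tfae_general (L : FirstOrder.Language) (M : Type*) [L.Structure M] :
    List.TFAE
      [ (∀ (n ℓ : ℕ) (φ : L.Formula (Fin n ⊕ Fin ℓ)), FormulaNIP M φ),
        (∀ (n : ℕ) (Xs : Set (Fin n → M)), Xs.Nonempty → IsDefinableSet L M n Xs →
          ∀ (ℓ : ℕ) (φ : L.Formula (Fin n ⊕ Fin ℓ)),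
            FiniteVC (HypSpaceRestrict M φ Xs)),
        (∀ (n ℓ : ℕ) (φ : L.Formula (Fin n ⊕ Fin ℓ)), FiniteVC (HypSpace M φ)) ] := by
  tfae_have 1 ↔ 3 := forall₃_congr fun _ _ _ => formulaNIP_iff_finiteVC
  tfae_have 3 → 2 := fun h n Xs _ _ ℓ φ => by
    rw [hypSpaceRestrict_eq]
    exact (h n ℓ φ).comp_embedding _
  tfae_have 2 → 3 := fun h n ℓ φ => by
    rcases isEmpty_or_nonempty (Fin n → M) with hM | hM
    · exact FiniteVC.of_isEmpty _
    · have hVC := h n Set.univ Set.univ_nonempty isDefinableSet_univ ℓ φ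
      rw [hypSpaceRestrict_eq] at hVC
      exact (finiteVC_comp_equiv_iff (Equiv.Set.univ _)).mp hVC
  tfae_finish

/-- The following are equivalent: (1) `M` has NIP; (2) every hypothesis space
`H^φ_X` over a non-empty definable instance space has finite VC dimension;
(3) every hypothesis space `H^φ` has finite VC dimension. -/
theorem nip_tfae (L : FirstOrder.Language) (M : Type*) [Nonempty M] [L.Structure M] :
    List.TFAE
      [ (∀ (n ℓ : ℕ) (φ : L.Formula (Fin n ⊕ Fin ℓ)), FormulaNIP M φ),
        (∀ (n : ℕ) (Xs : Set (Fin n → M)), Xs.Nonempty → IsDefinableSet L M n Xs →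
          ∀ (ℓ : ℕ) (φ : L.Formula (Fin n ⊕ Fin ℓ)),
            FiniteVC (HypSpaceRestrict M φ Xs)),
        (∀ (n ℓ : ℕ) (φ : L.Formula (Fin n ⊕ Fin ℓ)), FiniteVC (HypSpace M φ)) ] :=
  nip_tfae_general L M

end NIPVC
end

section
/- Let L be a first-order language expanding the language of ordered rings, let R be an o-minimal L-expansion of the ordered field of real numbers, let n, ℓ ∈ ℕ, let φ(x_1,…,x_n; p_1,…,p_ℓ) be an L-formula and let w ∈ ℝ^ℓ. Then the definable set φ(R; w) = {a ∈ ℝ^n : R ⊨ φ(a; w)} is a Borel subset of ℝ^n. -/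
/-!
Induct on `n`, viewing `S ⊆ ℝⁿ⁺¹` as the family of its fibres `T x = {y | (x, y) ∈ S}`.
By o-minimality each `T x` differs from its interior by a finite, hence closed, set `E x`, so
`S` is the union of `{(x, y) | y ∈ interior (T x)}` and `{(x, y) | y ∈ closure (E x)}`.
With `p, q` ranging over the rationals, the first is the union of the boxes
`{x | Ioo p q ⊆ T x} ×ˢ Ioo p q`, and the second is the complement of the analogous union for
`(E x)ᶜ`. The sets `{x | Ioo p q ⊆ T x}` and `{x | Ioo p q ⊆ (E x)ᶜ}` are definable subsets of
`ℝⁿ`, hence Borel by induction.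
-/

open FirstOrder

namespace OMin

variable (L : FirstOrder.Language) [L.Structure ℝ]

/-- A set `A ⊆ ℝⁿ` is definable (with parameters) over the `L`-structure `ℝ`. -/
def RealDefinable (n : ℕ) (A : Set (Fin n → ℝ)) : Prop :=
  ∃ (k : ℕ) (ψ : L.Formula (Fin n ⊕ Fin k)) (w : Fin k → ℝ),
    A = {a | ψ.Realize (Sum.elim a w)}

/-- The `L`-structure on `ℝ` is an o-minimal expansion of the ordered field of
real numbers: the order, addition and multiplication are (parameter-free)
definable, and every definable subset of `ℝ` is a finite union of points and
open intervals (with endpoints in `ℝ ∪ {±∞}`). -/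
def IsOMinimalRealExpansion : Prop :=
  (∃ φ : L.Formula (Fin 2), ∀ v : Fin 2 → ℝ, φ.Realize v ↔ v 0 < v 1) ∧
  (∃ φ : L.Formula (Fin 3), ∀ v : Fin 3 → ℝ, φ.Realize v ↔ v 0 + v 1 = v 2) ∧
  (∃ φ : L.Formula (Fin 3), ∀ v : Fin 3 → ℝ, φ.Realize v ↔ v 0 * v 1 = v 2) ∧
  (∀ A : Set (Fin 1 → ℝ), RealDefinable L 1 A →
    ∃ (F : Finset ℝ) (s : Finset (EReal × EReal)),
      (fun v : Fin 1 → ℝ => v 0) '' A =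
        ↑F ∪ ⋃ p ∈ s, {x : ℝ | p.1 < (x : EReal) ∧ (x : EReal) < p.2})

end OMin

open Set FirstOrder.Language

section Definability

variable {L : FirstOrder.Language} {M : Type*} [L.Structure M] {A : Set M} {α β : Type*}

theorem Set.Definable.preimage_sum_elim_const {S : Set (α ⊕ β → M)}
    (hS : A.Definable L S) (c : β → M) (hc : ∀ j, c j ∈ A) :
    A.Definable L {a | Sum.elim a c ∈ S} := by
  rw [definable_iff_exists_formula_sum] at hS ⊢
  obtain ⟨φ, rfl⟩ := hS
  refine ⟨φ.relabel (Sum.elim Sum.inl (Sum.elim Sum.inr (Sum.inl ∘ fun j => ⟨c j, hc j⟩))), ?_⟩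
  ext a
  simp only [mem_ofPred_eq, Formula.realize_relabel]
  congr! 1
  ext (_ | _ | _) <;> rfl

theorem Set.definable_setOf_realize_sum_elim (φ : L.Formula (α ⊕ β)) (w : β → M)
    (hw : ∀ j, w j ∈ A) : A.Definable L {a | φ.Realize (Sum.elim a w)} :=
  ((empty_definable_iff.2 ⟨φ, rfl⟩).mono (empty_subset A)).preimage_sum_elim_const w hw

end Definability

section Measurability

variable {X : Type*} [MeasurableSpace X] {T : X → Set ℝ}

theorem mem_interior_iff_exists_rat_Ioo_subset {s : Set ℝ} {y : ℝ} :
    y ∈ interior s ↔ ∃ p q : ℚ, y ∈ Ioo (p : ℝ) q ∧ Ioo (p : ℝ) q ⊆ s := by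
  rw [mem_interior_iff_mem_nhds, mem_nhds_iff_exists_Ioo_subset]
  constructor
  · rintro ⟨l, u, ⟨hl, hu⟩, hs⟩
    obtain ⟨p, hlp, hpy⟩ := exists_rat_btwn hl
    obtain ⟨q, hyq, hqu⟩ := exists_rat_btwn hu
    exact ⟨p, q, ⟨hpy, hyq⟩, (Ioo_subset_Ioo hlp.le hqu.le).trans hs⟩
  · rintro ⟨p, q, hy, hs⟩
    exact ⟨p, q, hy, hs⟩

theorem measurableSet_setOf_mem_interior
    (hT : ∀ p q : ℚ, MeasurableSet {x | Ioo (p : ℝ) q ⊆ T x}) :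
    MeasurableSet {z : X × ℝ | z.2 ∈ interior (T z.1)} := by
  have h : {z : X × ℝ | z.2 ∈ interior (T z.1)} =
      ⋃ (p : ℚ) (q : ℚ), {x | Ioo (p : ℝ) q ⊆ T x} ×ˢ Ioo (p : ℝ) q := by
    ext z
    simp only [mem_ofPred_eq, mem_interior_iff_exists_rat_Ioo_subset, mem_iUnion, mem_prod]
    exact exists₂_congr fun _ _ => and_comm
  rw [h]
  exact .iUnion fun p => .iUnion fun q => (hT p q).prod measurableSet_Ioo

theorem measurableSet_setOf_mem_closure
    (hT : ∀ p q : ℚ, MeasurableSet {x | Ioo (p : ℝ) q ⊆ (T x)ᶜ}) :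
    MeasurableSet {z : X × ℝ | z.2 ∈ closure (T z.1)} := by
  simp_rw [closure_eq_compl_interior_compl]
  exact (measurableSet_setOf_mem_interior hT).compl

theorem measurableSet_setOf_mem_of_finite_diff_interior
    (hfin : ∀ x, (T x \ interior (T x)).Finite)
    (hT : ∀ p q : ℚ, MeasurableSet {x | Ioo (p : ℝ) q ⊆ T x})
    (hE : ∀ p q : ℚ, MeasurableSet {x | Ioo (p : ℝ) q ⊆ (T x \ interior (T x))ᶜ}) :
    MeasurableSet {z : X × ℝ | z.2 ∈ T z.1} := by
  have h : {z : X × ℝ | z.2 ∈ T z.1} =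
      {z | z.2 ∈ interior (T z.1)} ∪ {z | z.2 ∈ closure (T z.1 \ interior (T z.1))} := by
    ext ⟨x, y⟩
    simp only [mem_union, mem_ofPred_eq, (hfin x).isClosed.closure_eq, mem_sdiff]
    by_cases hy : y ∈ interior (T x)
    · simp [hy, interior_subset hy]
    · simp [hy]
  rw [h]
  exact (measurableSet_setOf_mem_interior hT).union (measurableSet_setOf_mem_closure hE)

end Measurability

namespace OMin

variable (L : FirstOrder.Language) [L.Structure ℝ]

def DefinableFamily {α : Type*} (T : (α → ℝ) → Set ℝ) : Prop :=
  (univ : Set ℝ).Definable L {v : α ⊕ Fin 1 → ℝ | v (Sum.inr 0) ∈ T (v ∘ Sum.inl)}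

section

variable {L} {α : Type*}

theorem realDefinable_of_definable {n : ℕ} {S : Set (Fin n → ℝ)}
    (hS : (univ : Set ℝ).Definable L S) : RealDefinable L n S := by
  obtain ⟨A₀, -, hA₀⟩ := definable_iff_finitely_definable.1 hS
  rw [definable_iff_exists_formula_sum] at hA₀
  obtain ⟨φ, rfl⟩ := hA₀
  let e := A₀.equivFin
  refine ⟨A₀.card, φ.relabel (Sum.elim (Sum.inr ∘ e) Sum.inl), fun j => e.symm j, ?_⟩
  ext a
  simp only [mem_ofPred_eq, Formula.realize_relabel]
  congr! 1
  ext (x | i) <;> simp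

theorem IsOMinimalRealExpansion.definable_lt (hR : IsOMinimalRealExpansion L) :
    (univ : Set ℝ).Definable L {v : Fin 2 → ℝ | v 0 < v 1} := by
  obtain ⟨⟨φ, hφ⟩, -⟩ := hR
  exact (empty_definable_iff.2 ⟨φ, by ext; simp [hφ]⟩).mono (empty_subset _)

theorem IsOMinimalRealExpansion.finite_diff_interior (hR : IsOMinimalRealExpansion L)
    {T : Set ℝ} (hT : (univ : Set ℝ).Definable₁ L T) : (T \ interior T).Finite := by
  obtain ⟨F, s, hFs⟩ := hR.2.2.2 _ (realDefinable_of_definable hT)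
  have himage : (fun v : Fin 1 → ℝ => v 0) '' {v | v 0 ∈ T} = T :=
    Subset.antisymm (image_subset_iff.2 fun _ => id) fun y hy => ⟨fun _ => y, hy, rfl⟩
  rw [himage] at hFs
  set U := ⋃ p ∈ s, {x : ℝ | p.1 < (x : EReal) ∧ (x : EReal) < p.2}
  have hU : IsOpen U := isOpen_biUnion fun p _ => isOpen_Ioo.preimage continuous_coe_real_ereal
  have hUT : U ⊆ interior T := interior_maximal (hFs ▸ subset_union_right) hU
  refine F.finite_toSet.subset fun y ⟨hyT, hyI⟩ => ?_
  rw [hFs] at hyT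
  exact hyT.resolve_right fun hyU => hyI (hUT hyU)

theorem definable_setOf_lt (hlt : (univ : Set ℝ).Definable L {v : Fin 2 → ℝ | v 0 < v 1})
    (i j : α) : (univ : Set ℝ).Definable L {v : α → ℝ | v i < v j} :=
  hlt.preimage_comp ![i, j]

namespace DefinableFamily

variable {T T' : (α → ℝ) → Set ℝ}

theorem compl (hT : DefinableFamily L T) : DefinableFamily L fun x => (T x)ᶜ :=
  Definable.compl hT

theorem diff (hT : DefinableFamily L T) (hT' : DefinableFamily L T') :
    DefinableFamily L fun x => T x \ T' x :=
  Definable.sdiff hT hT'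

theorem definable₁ (hT : DefinableFamily L T) (x : α → ℝ) :
    (univ : Set ℝ).Definable₁ L (T x) :=
  (hT.preimage_comp Sum.swap).preimage_sum_elim_const x fun _ => trivial

theorem definable_setOf_Ioo_subset
    (hlt : (univ : Set ℝ).Definable L {v : Fin 2 → ℝ | v 0 < v 1}) (hT : DefinableFamily L T) :
    (univ : Set ℝ).Definable L
      {v : α ⊕ Fin 2 → ℝ | Ioo (v (Sum.inr 0)) (v (Sum.inr 1)) ⊆ T (v ∘ Sum.inl)} := by
  have hW : (univ : Set ℝ).Definable L {w : (α ⊕ Fin 2) ⊕ Fin 1 → ℝ |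
      w (Sum.inl (Sum.inr 0)) < w (Sum.inr 0) → w (Sum.inr 0) < w (Sum.inl (Sum.inr 1)) →
        w (Sum.inr 0) ∈ T (w ∘ Sum.inl ∘ Sum.inl)} :=
    (definable_setOf_lt hlt _ _).himp ((definable_setOf_lt hlt _ _).himp
      (hT.preimage_comp (Sum.elim (Sum.inl ∘ Sum.inl) fun _ => Sum.inr 0)))
  convert hW.forall_of_finite using 1
  ext v
  exact ⟨fun h u h₀ h₁ => h ⟨h₀, h₁⟩, fun h y hy => h (fun _ => y) hy.1 hy.2⟩

theorem definable_setOf_Ioo_const_subset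
    (hlt : (univ : Set ℝ).Definable L {v : Fin 2 → ℝ | v 0 < v 1}) (hT : DefinableFamily L T)
    (p q : ℝ) : (univ : Set ℝ).Definable L {x | Ioo p q ⊆ T x} :=
  (definable_setOf_Ioo_subset hlt hT).preimage_sum_elim_const ![p, q] fun _ => trivial

theorem interior
    (hlt : (univ : Set ℝ).Definable L {v : Fin 2 → ℝ | v 0 < v 1}) (hT : DefinableFamily L T) :
    DefinableFamily L fun x => interior (T x) := by
  have hW : (univ : Set ℝ).Definable L {w : (α ⊕ Fin 1) ⊕ Fin 2 → ℝ |
      w (Sum.inr 0) < w (Sum.inl (Sum.inr 0)) ∧ w (Sum.inl (Sum.inr 0)) < w (Sum.inr 1) ∧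
        Ioo (w (Sum.inr 0)) (w (Sum.inr 1)) ⊆ T (w ∘ Sum.inl ∘ Sum.inl)} :=
    (definable_setOf_lt hlt _ _).inter ((definable_setOf_lt hlt _ _).inter
      ((definable_setOf_Ioo_subset hlt hT).preimage_comp (Sum.elim (Sum.inl ∘ Sum.inl) Sum.inr)))
  unfold DefinableFamily
  convert hW.exists_of_finite using 1
  ext v
  simp only [mem_ofPred_eq, mem_interior_iff_mem_nhds, mem_nhds_iff_exists_Ioo_subset]
  exact ⟨fun ⟨l, u, hy, hs⟩ => ⟨![l, u], hy.1, hy.2, hs⟩,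
    fun ⟨c, h₀, h₁, hs⟩ => ⟨c 0, c 1, ⟨h₀, h₁⟩, hs⟩⟩

end DefinableFamily

theorem definableFamily_snoc {n : ℕ} {S : Set (Fin (n + 1) → ℝ)}
    (hS : (univ : Set ℝ).Definable L S) :
    DefinableFamily L fun x : Fin n → ℝ => {y | Fin.snoc x y ∈ S} := by
  have := hS.preimage_comp (Fin.snoc Sum.inl (Sum.inr 0) : Fin (n + 1) → Fin n ⊕ Fin 1)
  simpa only [DefinableFamily, preimage, Fin.comp_snoc, mem_ofPred_eq] using this

theorem IsOMinimalRealExpansion.measurableSet_of_definable (hR : IsOMinimalRealExpansion L)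
    {n : ℕ} {S : Set (Fin n → ℝ)} (hS : (univ : Set ℝ).Definable L S) : MeasurableSet S := by
  induction n with
  | zero => exact Subsingleton.measurableSet
  | succ n ih =>
    set T := fun x : Fin n → ℝ => {y | Fin.snoc x y ∈ S}
    have hT : DefinableFamily L T := definableFamily_snoc hS
    have hlt := hR.definable_lt
    have hS_eq : S = (fun v : Fin (n + 1) → ℝ => (Fin.init v, v (Fin.last n))) ⁻¹'
        {z | z.2 ∈ T z.1} := by
      ext v
      simp [T]
    rw [hS_eq]
    refine .preimage (measurableSet_setOf_mem_of_finite_diff_interior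
      (fun x => hR.finite_diff_interior (hT.definable₁ x))
      (fun p q => ih (hT.definable_setOf_Ioo_const_subset hlt p q))
      (fun p q => ih ((hT.diff (hT.interior hlt)).compl.definable_setOf_Ioo_const_subset hlt p q)))
      (by fun_prop)

end

/-- Every set definable (with parameters) over an o-minimal expansion of the
ordered field of real numbers is a Borel subset of `ℝⁿ`. -/
theorem definable_measurableSet
    (hR : IsOMinimalRealExpansion L) (n ℓ : ℕ)
    (φ : L.Formula (Fin n ⊕ Fin ℓ)) (w : Fin ℓ → ℝ) :
    MeasurableSet {a : Fin n → ℝ | φ.Realize (Sum.elim a w)} :=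
  hR.measurableSet_of_definable (definable_setOf_realize_sum_elim φ w fun _ => trivial)

end OMin
end

section
/- There exist a probability measure D on (Z, Σ_Z), where Z = ℝ × {0,1} and Σ_Z = B(ℝ) ⊗ P({0,1}), and a non-empty hypothesis space H ⊆ {0,1}^ℝ with Γ(h) ∈ Σ_Z for every h ∈ H and vc(H) = 1, such that for every m ∈ ℕ the map U : Z^m → [0,1], z ↦ sup_{h∈H} |er_D(h) − ˆer_z(h)|, is not Σ_Z^m-measurable; in particular, H is not well-behaved with respect to {D}. -/
/-!
Take a non-measurable set `S ⊆ ℝ` avoiding `0` (one exists because the Borel σ-algebra has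
only `𝔠` members), let `H` consist of the indicators of the points of `S`, and let `D` be the
point mass at `(0, 0)`. Every `h ∈ H` has true error `0`, while on the constant sample
`((x, 0), …, (x, 0))` the hypothesis `1_{x}` has sample error `1` exactly when `x ∈ S`. Hence
`U` composed with the measurable diagonal `x ↦ ((x, 0), …, (x, 0))` is the indicator of `S`, so
`U` is not measurable. No two-point set is shattered by indicators of single points, so
`vc(H) = 1`.
-/

open MeasureTheory

namespace PAC

variable {X : Type*}

open Cardinal

theorem exists_not_measurableSet {α : Type*} [MeasurableSpace α]
    [MeasurableSpace.CountablyGenerated α] (hα : 𝔠 ≤ #α) : ∃ s : Set α, ¬MeasurableSet s := by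
  by_contra! hall
  have hcard : #{ t : Set α | MeasurableSet t } ≤ 𝔠 := by
    rw [← MeasurableSpace.generateFrom_countableGeneratingSet (α := α)]
    exact MeasurableSpace.cardinal_measurableSet_le_continuum
      ((MeasurableSpace.countable_countableGeneratingSet).le_aleph0.trans aleph0_le_continuum)
  have huniv : { t : Set α | MeasurableSet t } = Set.univ := Set.eq_univ_of_forall hall
  rw [huniv, mk_univ, mk_set] at hcard
  exact (cantor 𝔠).not_ge (hcard.trans' (power_le_power_left two_ne_zero hα))

section MeasurableSingletonClass

variable {α : Type*} [MeasurableSpace α] [MeasurableSingletonClass α] {s : Set α}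

theorem not_measurableSet_diff_singleton (hs : ¬MeasurableSet s) (a : α) :
    ¬MeasurableSet (s \ {a}) := fun hsa =>
  hs <| Set.sdiff_union_inter s {a} ▸
    hsa.union (Set.subsingleton_singleton.anti Set.inter_subset_right).measurableSet

theorem nontrivial_of_not_measurableSet (hs : ¬MeasurableSet s) : s.Nontrivial :=
  Set.not_subsingleton_iff.mp fun h => hs h.measurableSet

end MeasurableSingletonClass

theorem measurableSet_graph [MeasurableSpace X] {h : X → Bool} (hh : Measurable h) :
    MeasurableSet (graph h) :=
  measurableSet_eq_fun (hh.comp measurable_fst) measurable_snd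

theorem trueError_dirac_eq_zero [MeasurableSpace (X × Bool)] [MeasurableSingletonClass (X × Bool)]
    {z : X × Bool} {h : X → Bool} (hz : h z.1 = z.2) : trueError (Measure.dirac z) h = 0 := by
  simp [trueError, Measure.dirac_apply, hz]

theorem empError_const {m : ℕ} (hm : 0 < m) (z : X × Bool) (h : X → Bool) :
    empError (fun _ : Fin m => z) h = if h z.1 = z.2 then 0 else 1 := by
  by_cases hz : h z.1 = z.2
  · simp [empError, hz]
  · simp [empError, hz, hm.ne']

theorem U_const_of_trueError_eq_zero [MeasurableSpace (X × Bool)] {H : Set (X → Bool)}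
    {D : Measure (X × Bool)} (hH : ∀ h ∈ H, trueError D h = 0) {m : ℕ} (hm : 0 < m)
    (z : X × Bool) :
    U H m D (fun _ => z) = {z : X × Bool | ∃ h ∈ H, h z.1 ≠ z.2}.indicator 1 z := by
  have hterm : ∀ h : H, |trueError D h.1 - empError (fun _ : Fin m => z) h.1|
      = if h.1 z.1 = z.2 then 0 else 1 := by
    rintro ⟨h, hh⟩
    by_cases hz : h z.1 = z.2 <;> simp [hH h hh, empError_const hm, hz]
  simp only [U, hterm]
  by_cases hz : ∃ h ∈ H, h z.1 ≠ z.2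
  · obtain ⟨h₀, hh₀, hne⟩ := hz
    have : Nonempty H := ⟨⟨h₀, hh₀⟩⟩
    rw [Set.indicator_of_mem (show z ∈ {z : X × Bool | ∃ h ∈ H, h z.1 ≠ z.2} from ⟨h₀, hh₀, hne⟩)]
    have hbdd : BddAbove (Set.range fun h : H => if h.1 z.1 = z.2 then (0 : ℝ) else 1) :=
      ⟨1, by rintro _ ⟨h, rfl⟩; by_cases hz : h.1 z.1 = z.2 <;> simp [hz]⟩
    exact le_antisymm (ciSup_le fun h => by by_cases hz : h.1 z.1 = z.2 <;> simp [hz])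
      (le_ciSup_of_le hbdd ⟨h₀, hh₀⟩ (by simp [hne]))
  · push Not at hz
    rw [Set.indicator_of_notMem (by simpa using hz)]
    simp [hz]

theorem not_measurable_U_of_trueError_eq_zero [MeasurableSpace X] {H : Set (X → Bool)}
    {D : Measure (X × Bool)} (hH : ∀ h ∈ H, trueError D h = 0) {m : ℕ} (hm : 0 < m)
    (hpos : ¬MeasurableSet {x | ∃ h ∈ H, h x = true}) : ¬Measurable (U H m D) := by
  intro hU
  have hdiag : Measurable fun x : X => U H m D fun _ : Fin m => (x, false) :=
    hU.comp (measurable_pi_lambda _ fun _ => measurable_id.prodMk measurable_const)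
  have hind : (fun x : X => U H m D fun _ : Fin m => (x, false))
      = {x | ∃ h ∈ H, h x = true}.indicator 1 := by
    ext x
    rw [U_const_of_trueError_eq_zero hH hm, ← Set.indicator_comp_right fun x : X => (x, false)]
    congr 1
    ext
    simp
  exact hpos ((measurable_indicator_const_iff (1 : ℝ)).mp (hind ▸ hdiag))

theorem not_wellBehaved_of_not_measurable_U [MeasurableSpace (X × Bool)] {H : Set (X → Bool)}
    {D : Measure (X × Bool)} (hU : ∀ m, 0 < m → ¬Measurable (U H m D)) :
    ¬WellBehaved H {D} := by
  rintro ⟨-, mH, hmH, hall⟩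
  exact hU mH hmH ((hall mH le_rfl).2 D rfl)

section PointIndicators

variable [DecidableEq X]

def pointIndicator (a : X) : X → Bool := fun x => decide (x = a)

def pointIndicators (S : Set X) : Set (X → Bool) := pointIndicator '' S

theorem measurable_pointIndicator [MeasurableSpace X] [MeasurableSingletonClass X] (a : X) :
    Measurable (pointIndicator a) :=
  measurable_to_bool <| by simp [pointIndicator, Set.preimage]

theorem setOf_exists_pointIndicators_eq_true (S : Set X) :
    {x | ∃ h ∈ pointIndicators S, h x = true} = S := by
  ext x
  simp [pointIndicators, pointIndicator]

theorem trueError_dirac_pointIndicators [MeasurableSpace X] [MeasurableSingletonClass X]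
    {S : Set X} {b : X} (hb : b ∉ S) :
    ∀ h ∈ pointIndicators S, trueError (Measure.dirac (b, false)) h = 0 := by
  rintro _ ⟨a, ha, rfl⟩
  exact trueError_dirac_eq_zero (decide_eq_false fun hba : b = a => hb (hba ▸ ha))

theorem shatters_pointIndicators_singleton {S : Set X} (hS : S.Nontrivial) {a : X} (ha : a ∈ S) :
    Shatters (pointIndicators S) {a} := by
  obtain ⟨b, hb, hba⟩ := hS.exists_ne a
  intro f
  cases hf : f a
  · exact ⟨pointIndicator b, ⟨b, hb, rfl⟩, by simp [pointIndicator, hf, Ne.symm hba]⟩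
  · exact ⟨pointIndicator a, ⟨a, ha, rfl⟩, by simp [pointIndicator, hf]⟩

theorem card_le_one_of_shatters_pointIndicators {S : Set X} {A : Finset X}
    (hA : Shatters (pointIndicators S) A) : A.card ≤ 1 := by
  obtain ⟨_, ⟨a, -, rfl⟩, hall⟩ := hA fun _ => true
  exact Finset.card_le_one.mpr fun x hx y hy => by
    simp only [pointIndicator, decide_eq_true_eq] at hall
    rw [hall x hx, hall y hy]

end PointIndicators

/-- There are a probability distribution `D` on `Z = ℝ × {0,1}` (with
`Σ_Z = B(ℝ) ⊗ P({0,1})`) and a hypothesis space `H` with measurable graphs and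
VC dimension `1` such that for every `m` the map
`U : Z^m → [0,1]`, `z ↦ sup_{h∈H} |er_D(h) − ˆer_z(h)|`, is not `Σ_Z^m`-measurable;
in particular, `H` is not well-behaved with respect to `{D}`. -/
theorem exists_finiteVC_not_wellBehaved :
    ∃ (D : Measure (ℝ × Bool)) (H : Set (ℝ → Bool)),
      IsProbabilityMeasure D ∧ H.Nonempty ∧
      (∀ h ∈ H, MeasurableSet (graph h)) ∧
      ((∃ A : Finset ℝ, A.card = 1 ∧ Shatters H A) ∧
        (∀ A : Finset ℝ, Shatters H A → A.card ≤ 1)) ∧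
      (∀ m : ℕ, 0 < m → ¬ Measurable (U H m D)) ∧
      ¬ WellBehaved H {D} := by
  obtain ⟨T, hT⟩ := exists_not_measurableSet (α := ℝ) mk_real.ge
  set S := T \ {0}
  have hS : ¬MeasurableSet S := not_measurableSet_diff_singleton hT 0
  have hS0 : (0 : ℝ) ∉ S := fun h => h.2 rfl
  have hSnt : S.Nontrivial := nontrivial_of_not_measurableSet hS
  obtain ⟨a, ha⟩ := hSnt.nonempty
  have hU : ∀ m, 0 < m → ¬Measurable (U (pointIndicators S) m (Measure.dirac (0, false))) :=
    fun m hm => not_measurable_U_of_trueError_eq_zero (trueError_dirac_pointIndicators hS0) hm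
      (by rwa [setOf_exists_pointIndicators_eq_true])
  refine ⟨Measure.dirac (0, false), pointIndicators S, inferInstance, ⟨_, a, ha, rfl⟩, ?_,
    ⟨⟨{a}, Finset.card_singleton a, shatters_pointIndicators_singleton hSnt ha⟩,
      fun A => card_le_one_of_shatters_pointIndicators⟩, hU, not_wellBehaved_of_not_measurable_U hU⟩
  rintro _ ⟨b, -, rfl⟩
  exact measurableSet_graph (measurable_pointIndicator b)

end PAC
end
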